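/- arXiv:math/9604220 — 4 statements merged into one kernel-verified Lean document; each statement's English description precedes it below -/
import Mathlib

section
/- If (A, **A**) is a p-Banach operator ideal (0 < p ≤ 1) and (B, **B**) a q-Banach operator ideal, then the right-B-quotient A ∘ B⁻¹, defined by T ∈ (A ∘ B⁻¹)(E,F) iff TS ∈ A(G,F) for all Banach spaces G and all S ∈ B(G,E), with norm (**A**∘**B**⁻¹)(T) = sup{**A**(TS) : **B**(S) = 1}, is a p-Banach operator ideal. -/
noncomputable section

open scoped Classical

universe u

/-- A bundled Banach space over `ℝ`. -/
structure BanachSpc : Type (u + 1) where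
  carrier : Type u
  [grp : NormedAddCommGroup carrier]
  [mod : NormedSpace ℝ carrier]
  [cpl : CompleteSpace carrier]

attribute [instance] BanachSpc.grp BanachSpc.mod BanachSpc.cpl

instance : CoeSort BanachSpc.{u} (Type u) := ⟨BanachSpc.carrier⟩

/-- The data of an operator ideal: a class of operators together with an ideal "norm". -/
structure OperatorIdeal : Type (u + 1) where
  mem : ∀ (E F : BanachSpc.{u}), (E.carrier →L[ℝ] F.carrier) → Prop
  nrm : ∀ (E F : BanachSpc.{u}), (E.carrier →L[ℝ] F.carrier) → ℝ

/-- A finite rank (finite) operator. -/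
def FinRankOp {E F : BanachSpc.{u}} (T : E.carrier →L[ℝ] F.carrier) : Prop :=
  FiniteDimensional ℝ (LinearMap.range (T : E.carrier →ₗ[ℝ] F.carrier))

/-- The trace of a (finite rank) operator, computed as the trace of the induced
endomorphism of its range. -/
noncomputable def fTrace {E : BanachSpc.{u}} (T : E.carrier →L[ℝ] E.carrier) : ℝ :=
  LinearMap.trace ℝ (LinearMap.range (T : E.carrier →ₗ[ℝ] E.carrier))
    ((T : E.carrier →ₗ[ℝ] E.carrier).restrict
      (p := LinearMap.range (T : E.carrier →ₗ[ℝ] E.carrier))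
      (q := LinearMap.range (T : E.carrier →ₗ[ℝ] E.carrier))
      (fun x _ => LinearMap.mem_range_self _ x))

/-- `IsPBanachIdeal p A` : `A` is a `p`-Banach operator ideal (`0 < p ≤ 1`). -/
structure IsPBanachIdeal (p : ℝ) (A : OperatorIdeal.{u}) : Prop where
  p_pos : 0 < p
  p_le_one : p ≤ 1
  finrank_mem : ∀ (E F : BanachSpc.{u}) (T : E.carrier →L[ℝ] F.carrier), FinRankOp T → A.mem E F T
  nonneg : ∀ (E F : BanachSpc.{u}) (T : E.carrier →L[ℝ] F.carrier), 0 ≤ A.nrm E F T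
  opnorm_le : ∀ (E F : BanachSpc.{u}) (T : E.carrier →L[ℝ] F.carrier), A.mem E F T → ‖T‖ ≤ A.nrm E F T
  rank_one_le : ∀ (E F : BanachSpc.{u}) (a : E.carrier →L[ℝ] ℝ) (y : F.carrier),
    A.nrm E F (a.smulRight y) ≤ ‖a‖ * ‖y‖
  smul_mem : ∀ (E F : BanachSpc.{u}) (c : ℝ) (T : E.carrier →L[ℝ] F.carrier),
    A.mem E F T → A.mem E F (c • T)
  nrm_smul : ∀ (E F : BanachSpc.{u}) (c : ℝ) (T : E.carrier →L[ℝ] F.carrier),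
    A.mem E F T → A.nrm E F (c • T) = |c| * A.nrm E F T
  add_mem : ∀ (E F : BanachSpc.{u}) (S T : E.carrier →L[ℝ] F.carrier),
    A.mem E F S → A.mem E F T → A.mem E F (S + T)
  p_triangle : ∀ (E F : BanachSpc.{u}) (S T : E.carrier →L[ℝ] F.carrier),
    A.mem E F S → A.mem E F T →
    A.nrm E F (S + T) ^ p ≤ A.nrm E F S ^ p + A.nrm E F T ^ p
  comp_mem : ∀ (E F G H : BanachSpc.{u}) (R : E.carrier →L[ℝ] F.carrier)
    (T : F.carrier →L[ℝ] G.carrier) (S : G.carrier →L[ℝ] H.carrier),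
    A.mem F G T → A.mem E H (S.comp (T.comp R))
  comp_le : ∀ (E F G H : BanachSpc.{u}) (R : E.carrier →L[ℝ] F.carrier)
    (T : F.carrier →L[ℝ] G.carrier) (S : G.carrier →L[ℝ] H.carrier),
    A.mem F G T → A.nrm E H (S.comp (T.comp R)) ≤ ‖S‖ * A.nrm F G T * ‖R‖
  complete : ∀ (E F : BanachSpc.{u}) (f : ℕ → (E.carrier →L[ℝ] F.carrier)),
    (∀ n, A.mem E F (f n)) →
    (∀ ε > (0 : ℝ), ∃ N : ℕ, ∀ m ≥ N, ∀ n ≥ N, A.nrm E F (f m - f n) ^ p < ε) →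
    ∃ T, A.mem E F T ∧ ∀ ε > (0 : ℝ), ∃ N : ℕ, ∀ n ≥ N, A.nrm E F (f n - T) ^ p < ε

namespace OperatorIdeal

/-- The product ideal `A ∘ B`. -/
def prod (A B : OperatorIdeal.{u}) : OperatorIdeal.{u} where
  mem E F T := ∃ (G : BanachSpc.{u}) (R : E.carrier →L[ℝ] G.carrier)
    (S : G.carrier →L[ℝ] F.carrier), B.mem E G R ∧ A.mem G F S ∧ T = S.comp R
  nrm E F T := sInf { r : ℝ | ∃ (G : BanachSpc.{u}) (R : E.carrier →L[ℝ] G.carrier)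
    (S : G.carrier →L[ℝ] F.carrier), B.mem E G R ∧ A.mem G F S ∧ T = S.comp R ∧
    r = A.nrm G F S * B.nrm E G R }

/-- The right-`B`-quotient `A ∘ B⁻¹`. -/
def rightQuotient (A B : OperatorIdeal.{u}) : OperatorIdeal.{u} where
  mem E F T := ∀ (G : BanachSpc.{u}) (S : G.carrier →L[ℝ] E.carrier),
    B.mem G E S → A.mem G F (T.comp S)
  nrm E F T := sSup { r : ℝ | ∃ (G : BanachSpc.{u}) (S : G.carrier →L[ℝ] E.carrier),
    B.mem G E S ∧ B.nrm G E S = 1 ∧ r = A.nrm G F (T.comp S) }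

/-- The conjugate ideal `A^Δ`, defined by trace duality against finite rank operators. -/
def conj (A : OperatorIdeal.{u}) : OperatorIdeal.{u} where
  mem E F T := ∃ c : ℝ, 0 ≤ c ∧ ∀ L : F.carrier →L[ℝ] E.carrier, FinRankOp L →
    |fTrace (T.comp L)| ≤ c * A.nrm F E L
  nrm E F T := sInf { c : ℝ | 0 ≤ c ∧ ∀ L : F.carrier →L[ℝ] E.carrier, FinRankOp L →
    |fTrace (T.comp L)| ≤ c * A.nrm F E L }

/-- The adjoint ideal `A*`. -/
def adj (A : OperatorIdeal.{u}) : OperatorIdeal.{u} where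
  mem E F T := ∃ c : ℝ, 0 ≤ c ∧ ∀ (E₀ F₀ : BanachSpc.{u})
    (B : E₀.carrier →L[ℝ] E.carrier) (S : F₀.carrier →L[ℝ] E₀.carrier)
    (A₀ : F.carrier →L[ℝ] F₀.carrier), FinRankOp B → FinRankOp A₀ → A.mem F₀ E₀ S →
    |fTrace (T.comp (B.comp (S.comp A₀)))| ≤ c * ‖B‖ * A.nrm F₀ E₀ S * ‖A₀‖
  nrm E F T := sInf { c : ℝ | 0 ≤ c ∧ ∀ (E₀ F₀ : BanachSpc.{u})
    (B : E₀.carrier →L[ℝ] E.carrier) (S : F₀.carrier →L[ℝ] E₀.carrier)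
    (A₀ : F.carrier →L[ℝ] F₀.carrier), FinRankOp B → FinRankOp A₀ → A.mem F₀ E₀ S →
    |fTrace (T.comp (B.comp (S.comp A₀)))| ≤ c * ‖B‖ * A.nrm F₀ E₀ S * ‖A₀‖ }

/-- The ideal of approximable operators, with the operator norm. -/
def approx : OperatorIdeal.{u} where
  mem E F T := ∀ ε > (0 : ℝ), ∃ L : E.carrier →L[ℝ] F.carrier, FinRankOp L ∧ ‖T - L‖ < ε
  nrm E F T := ‖T‖

/-- The minimal kernel `A^min = F̄ ∘ A ∘ F̄`. -/
def minKer (A : OperatorIdeal.{u}) : OperatorIdeal.{u} :=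
  OperatorIdeal.prod approx (OperatorIdeal.prod A approx)

/-- The injective hull `A^inj` : `T ∈ A^inj` iff `J ∘ T ∈ A` for some metric injection `J`,
with the induced infimum norm. -/
def injHull (A : OperatorIdeal.{u}) : OperatorIdeal.{u} where
  mem E F T := ∃ (G : BanachSpc.{u}) (J : F.carrier →L[ℝ] G.carrier),
    Isometry J ∧ A.mem E G (J.comp T)
  nrm E F T := sInf { r : ℝ | ∃ (G : BanachSpc.{u}) (J : F.carrier →L[ℝ] G.carrier),
    Isometry J ∧ A.mem E G (J.comp T) ∧ r = A.nrm E G (J.comp T) }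

end OperatorIdeal

/-- A finite dimensional subspace of a Banach space, as a Banach space. -/
def SubBanach (F : BanachSpc.{u}) (N : Submodule ℝ F.carrier)
    (hN : FiniteDimensional ℝ ↥N) : BanachSpc.{u} :=
  letI := hN; ⟨↥N⟩

/-- A quotient of a Banach space by a closed subspace, as a Banach space. -/
def QuotBanach (E : BanachSpc.{u}) (K : Submodule ℝ E.carrier)
    (hK : IsClosed (K : Set E.carrier)) : BanachSpc.{u} :=
  letI := hK; ⟨E.carrier ⧸ K⟩

/-- The dual of a Banach space, as a Banach space. -/
def DualB (F : BanachSpc.{u}) : BanachSpc.{u} := ⟨StrongDual ℝ F.carrier⟩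

/-- The bidual of a Banach space, as a Banach space. -/
def BidualB (F : BanachSpc.{u}) : BanachSpc.{u} := DualB (DualB F)

/-- Left accessibility of an operator ideal. -/
def LeftAccessible (A : OperatorIdeal.{u}) : Prop :=
  ∀ (E N : BanachSpc.{u}), FiniteDimensional ℝ N.carrier →
  ∀ (T : E.carrier →L[ℝ] N.carrier), ∀ ε > (0 : ℝ),
  ∃ (K : Submodule ℝ E.carrier) (hK : IsClosed (K : Set E.carrier))
    (_ : FiniteDimensional ℝ (E.carrier ⧸ K))
    (S : (QuotBanach E K hK).carrier →L[ℝ] N.carrier),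
    (∀ x : E.carrier, T x = S (Submodule.Quotient.mk x)) ∧
    A.nrm (QuotBanach E K hK) N S ≤ (1 + ε) * A.nrm E N T

/-- Right accessibility of an operator ideal. -/
def RightAccessible (A : OperatorIdeal.{u}) : Prop :=
  ∀ (M F : BanachSpc.{u}), FiniteDimensional ℝ M.carrier →
  ∀ (T : M.carrier →L[ℝ] F.carrier), ∀ ε > (0 : ℝ),
  ∃ (N : Submodule ℝ F.carrier) (hN : FiniteDimensional ℝ ↥N)
    (S : M.carrier →L[ℝ] (SubBanach F N hN).carrier),
    (∀ x : M.carrier, T x = N.subtype (S x)) ∧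
    A.nrm M (SubBanach F N hN) S ≤ (1 + ε) * A.nrm M F T

/-- Total accessibility of an operator ideal. -/
def TotallyAccessible (A : OperatorIdeal.{u}) : Prop :=
  ∀ (E F : BanachSpc.{u}) (T : E.carrier →L[ℝ] F.carrier), FinRankOp T → ∀ ε > (0 : ℝ),
  ∃ (K : Submodule ℝ E.carrier) (hK : IsClosed (K : Set E.carrier))
    (_ : FiniteDimensional ℝ (E.carrier ⧸ K))
    (N : Submodule ℝ F.carrier) (hN : FiniteDimensional ℝ ↥N)
    (S : (QuotBanach E K hK).carrier →L[ℝ] (SubBanach F N hN).carrier),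
    (∀ x : E.carrier, T x = N.subtype (S (Submodule.Quotient.mk x))) ∧
    A.nrm (QuotBanach E K hK) (SubBanach F N hN) S ≤ (1 + ε) * A.nrm E F T

/-- The `A`-extension property. -/
def ExtensionProperty (A : OperatorIdeal.{u}) : Prop :=
  ∀ ε > (0 : ℝ), ∀ (E G F : BanachSpc.{u}) (J : E.carrier →L[ℝ] G.carrier), Isometry J →
  ∀ (T : E.carrier →L[ℝ] F.carrier), A.mem E F T →
  ∃ Tt : G.carrier →L[ℝ] F.carrier, A.mem G F Tt ∧ (∀ x : E.carrier, T x = Tt (J x)) ∧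
    A.nrm G F Tt ≤ (1 + ε) * A.nrm E F T

/-- The principle of `A`-local reflexivity (`A`-LRP). -/
def LRPholds (A : OperatorIdeal.{u}) : Prop :=
  ∀ (M F : BanachSpc.{u}), FiniteDimensional ℝ M.carrier →
  ∀ (N : Submodule ℝ (StrongDual ℝ F.carrier)), FiniteDimensional ℝ ↥N →
  ∀ (T : M.carrier →L[ℝ] StrongDual ℝ (StrongDual ℝ F.carrier)), ∀ ε > (0 : ℝ),
  ∃ S : M.carrier →L[ℝ] F.carrier,
    A.nrm M F S ≤ (1 + ε) * (A.adj.adj).nrm M (BidualB F) T ∧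
    (∀ (x : M.carrier) (b : ↥N), (b : StrongDual ℝ F.carrier) (S x) = T x b) ∧
    (∀ x : M.carrier, T x ∈ Set.range (NormedSpace.inclusionInDoubleDual ℝ F.carrier) →
      NormedSpace.inclusionInDoubleDual ℝ F.carrier (S x) = T x)

/-- `A` is a maximal Banach ideal: `A = A** = (A*)*` isometrically. -/
def IsMaximalIdeal (A : OperatorIdeal.{u}) : Prop :=
  ∀ (E F : BanachSpc.{u}) (T : E.carrier →L[ℝ] F.carrier),
    (A.mem E F T ↔ (A.adj.adj).mem E F T) ∧ A.nrm E F T = (A.adj.adj).nrm E F T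


/-! Membership, the ideal inequality and the `p`-triangle inequality pass from `A` to `A ∘ B⁻¹`
one normalized `S ∈ B` at a time. The real point is that the supremum defining `(A ∘ B⁻¹)(T)` is
finite: otherwise normalized `Sₙ ∈ B` with fast-growing `A(T Sₙ)` can be scaled to be `q`-summable
in `B` and glued, by completeness of `B`, into one `U ∈ B` on the `ℓ¹`-sum of their domains, forcing
`A(T U) = ∞`. Finiteness gives `A(T S) ≤ (A ∘ B⁻¹)(T) · B(S)`, hence the operator norm bound (via
rank-one `S`) and completeness (via completeness of `A`). -/

open Filter Topology

lemma FinRankOp.comp_right {E F G : BanachSpc.{u}} {T : E.carrier →L[ℝ] F.carrier}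
    (hT : FinRankOp T) (S : G.carrier →L[ℝ] E.carrier) : FinRankOp (T.comp S) := by
  unfold FinRankOp at hT ⊢
  rw [ContinuousLinearMap.toLinearMap_comp]
  exact Submodule.finiteDimensional_of_le (LinearMap.range_comp_le_range _ _)

lemma finRankOp_zero {E F : BanachSpc.{u}} : FinRankOp (0 : E.carrier →L[ℝ] F.carrier) := by
  unfold FinRankOp
  rw [ContinuousLinearMap.toLinearMap_zero, LinearMap.range_zero]
  infer_instance

lemma finRankOp_smulRight {E F : BanachSpc.{u}} (a : E.carrier →L[ℝ] ℝ) (y : F.carrier) :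
    FinRankOp (a.smulRight y) := by
  unfold FinRankOp
  refine Submodule.finiteDimensional_of_le (S₂ := Submodule.span ℝ {y}) ?_
  rintro _ ⟨x, rfl⟩
  exact Submodule.smul_mem _ _ (Submodule.mem_span_singleton_self y)

namespace IsPBanachIdeal

variable {p : ℝ} {A : OperatorIdeal.{u}} {E F G H : BanachSpc.{u}}

lemma mem_zero (hA : IsPBanachIdeal p A) : A.mem E F 0 :=
  hA.finrank_mem E F 0 finRankOp_zero

lemma nrm_zero (hA : IsPBanachIdeal p A) : A.nrm E F 0 = 0 := by
  simpa using hA.nrm_smul E F 0 0 hA.mem_zero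

lemma sub_mem (hA : IsPBanachIdeal p A) {S T : E.carrier →L[ℝ] F.carrier}
    (hS : A.mem E F S) (hT : A.mem E F T) : A.mem E F (S - T) := by
  rw [sub_eq_add_neg, ← neg_one_smul ℝ T]
  exact hA.add_mem E F _ _ hS (hA.smul_mem E F _ T hT)

lemma nrm_sub_comm (hA : IsPBanachIdeal p A) {S T : E.carrier →L[ℝ] F.carrier}
    (hS : A.mem E F S) (hT : A.mem E F T) : A.nrm E F (S - T) = A.nrm E F (T - S) := by
  rw [← neg_sub, ← neg_one_smul ℝ (T - S), hA.nrm_smul E F _ _ (hA.sub_mem hT hS)]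
  simp

lemma mem_comp_left (hA : IsPBanachIdeal p A) (S : F.carrier →L[ℝ] G.carrier)
    {T : E.carrier →L[ℝ] F.carrier} (hT : A.mem E F T) : A.mem E G (S.comp T) := by
  simpa using hA.comp_mem E E F G (.id ℝ E.carrier) T S hT

lemma mem_comp_right (hA : IsPBanachIdeal p A) {T : F.carrier →L[ℝ] G.carrier}
    (hT : A.mem F G T) (R : E.carrier →L[ℝ] F.carrier) : A.mem E G (T.comp R) := by
  simpa using hA.comp_mem E F G G R T (.id ℝ G.carrier) hT

lemma nrm_comp_left_le (hA : IsPBanachIdeal p A) (S : F.carrier →L[ℝ] G.carrier)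
    {T : E.carrier →L[ℝ] F.carrier} (hT : A.mem E F T) :
    A.nrm E G (S.comp T) ≤ ‖S‖ * A.nrm E F T := by
  have h := hA.comp_le E E F G (.id ℝ E.carrier) T S hT
  rw [ContinuousLinearMap.comp_id] at h
  exact h.trans (mul_le_of_le_one_right (by positivity [hA.nonneg E F T])
    ContinuousLinearMap.norm_id_le)

lemma nrm_comp_right_le (hA : IsPBanachIdeal p A) {T : F.carrier →L[ℝ] G.carrier}
    (hT : A.mem F G T) (R : E.carrier →L[ℝ] F.carrier) :
    A.nrm E G (T.comp R) ≤ A.nrm F G T * ‖R‖ := by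
  have h := hA.comp_le E F G G R T (.id ℝ G.carrier) hT
  rw [ContinuousLinearMap.id_comp] at h
  rw [mul_assoc] at h
  exact h.trans (mul_le_of_le_one_left (by positivity [hA.nonneg F G T])
    ContinuousLinearMap.norm_id_le)

lemma sum_mem (hA : IsPBanachIdeal p A) {ι : Type*} (s : Finset ι)
    {f : ι → E.carrier →L[ℝ] F.carrier}
    (hf : ∀ k, A.mem E F (f k)) : A.mem E F (∑ k ∈ s, f k) := by
  induction s using Finset.induction_on with
  | empty => simpa using hA.mem_zero
  | insert a s ha ih => simpa [Finset.sum_insert ha] using hA.add_mem E F _ _ (hf a) ih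

lemma nrm_sum_rpow_le (hA : IsPBanachIdeal p A) {ι : Type*} (s : Finset ι)
    {f : ι → E.carrier →L[ℝ] F.carrier} (hf : ∀ k, A.mem E F (f k)) :
    A.nrm E F (∑ k ∈ s, f k) ^ p ≤ ∑ k ∈ s, A.nrm E F (f k) ^ p := by
  induction s using Finset.induction_on with
  | empty => simp [hA.nrm_zero, Real.zero_rpow hA.p_pos.ne']
  | insert a s ha ih =>
    rw [Finset.sum_insert ha, Finset.sum_insert ha]
    exact (hA.p_triangle E F _ _ (hf a) (hA.sum_mem s hf)).trans (by gcongr)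

lemma tendsto_of_nrm_rpow (hA : IsPBanachIdeal p A) {f : ℕ → E.carrier →L[ℝ] F.carrier}
    {T : E.carrier →L[ℝ] F.carrier} (hf : ∀ n, A.mem E F (f n - T))
    (h : ∀ ε > (0 : ℝ), ∃ N : ℕ, ∀ n ≥ N, A.nrm E F (f n - T) ^ p < ε) :
    Tendsto f atTop (𝓝 T) := by
  refine Metric.tendsto_atTop.2 fun ε hε => ?_
  obtain ⟨N, hN⟩ := h (ε ^ p) (Real.rpow_pos_of_pos hε p)
  refine ⟨N, fun n hn => ?_⟩
  rw [dist_eq_norm]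
  exact (hA.opnorm_le E F _ (hf n)).trans_lt
    ((Real.rpow_lt_rpow_iff (hA.nonneg E F _) hε.le hA.p_pos).1 (hN n hn))

lemma mem_and_tendsto_of_cauchy_of_tendsto (hA : IsPBanachIdeal p A)
    {f : ℕ → E.carrier →L[ℝ] F.carrier} {T : E.carrier →L[ℝ] F.carrier}
    (hf : ∀ n, A.mem E F (f n))
    (hcauchy : ∀ ε > (0 : ℝ), ∃ N : ℕ, ∀ m ≥ N, ∀ n ≥ N, A.nrm E F (f m - f n) ^ p < ε)
    (hT : Tendsto f atTop (𝓝 T)) :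
    A.mem E F T ∧ ∀ ε > (0 : ℝ), ∃ N : ℕ, ∀ n ≥ N, A.nrm E F (f n - T) ^ p < ε := by
  obtain ⟨V, hV, hconv⟩ := hA.complete E F f hf hcauchy
  obtain rfl : V = T :=
    tendsto_nhds_unique (hA.tendsto_of_nrm_rpow (fun n => hA.sub_mem (hf n) hV) hconv) hT
  exact ⟨hV, hconv⟩

lemma exists_mem_tendsto_of_summable (hA : IsPBanachIdeal p A)
    {f : ℕ → E.carrier →L[ℝ] F.carrier} (hf : ∀ k, A.mem E F (f k))
    (hs : Summable fun k => A.nrm E F (f k) ^ p) :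
    ∃ T, A.mem E F T ∧ Tendsto (fun n => ∑ k ∈ Finset.range n, f k) atTop (𝓝 T) := by
  set s : ℕ → E.carrier →L[ℝ] F.carrier := fun n => ∑ k ∈ Finset.range n, f k
  have hs_mem : ∀ n, A.mem E F (s n) := fun n => hA.sum_mem _ hf
  have hcauchy : ∀ ε > (0 : ℝ), ∃ N : ℕ, ∀ m ≥ N, ∀ n ≥ N, A.nrm E F (s m - s n) ^ p < ε := by
    intro ε hε
    obtain ⟨N, hN⟩ := Metric.cauchySeq_iff.1 hs.hasSum.tendsto_sum_nat.cauchySeq ε hε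
    refine ⟨N, fun m hm n hn => ?_⟩
    wlog hnm : n ≤ m generalizing m n
    · rw [hA.nrm_sub_comm (hs_mem m) (hs_mem n)]
      exact this n hn m hm (le_of_not_ge hnm)
    calc A.nrm E F (s m - s n) ^ p
        = A.nrm E F (∑ k ∈ Finset.Ico n m, f k) ^ p := by
          rw [Finset.sum_Ico_eq_sub _ hnm]
      _ ≤ ∑ k ∈ Finset.Ico n m, A.nrm E F (f k) ^ p := hA.nrm_sum_rpow_le _ hf
      _ = ∑ k ∈ Finset.range m, A.nrm E F (f k) ^ p - ∑ k ∈ Finset.range n, A.nrm E F (f k) ^ p :=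
          Finset.sum_Ico_eq_sub _ hnm
      _ ≤ dist (∑ k ∈ Finset.range m, A.nrm E F (f k) ^ p)
            (∑ k ∈ Finset.range n, A.nrm E F (f k) ^ p) := le_abs_self _
      _ < ε := hN m hm n hn
  obtain ⟨T, hT, hconv⟩ := hA.complete E F s hs_mem hcauchy
  exact ⟨T, hT, hA.tendsto_of_nrm_rpow (fun n => hA.sub_mem (hs_mem n) hT) hconv⟩

lemma eq_zero_or_eq_nrm_smul (hA : IsPBanachIdeal p A) {T : E.carrier →L[ℝ] F.carrier}
    (hT : A.mem E F T) :
    T = 0 ∨ ∃ T', A.mem E F T' ∧ A.nrm E F T' = 1 ∧ T = A.nrm E F T • T' := by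
  rcases (hA.nonneg E F T).eq_or_lt with h0 | hpos
  · exact .inl (norm_le_zero_iff.1 (h0 ▸ hA.opnorm_le E F T hT))
  refine .inr ⟨(A.nrm E F T)⁻¹ • T, hA.smul_mem E F _ T hT, ?_, ?_⟩
  · rw [hA.nrm_smul E F _ T hT, abs_of_pos (inv_pos.2 hpos), inv_mul_cancel₀ hpos.ne']
  · rw [smul_smul, mul_inv_cancel₀ hpos.ne', one_smul]

end IsPBanachIdeal

namespace BanachSpc

def l1Sum (G : ℕ → BanachSpc.{u}) : BanachSpc.{u} := ⟨lp (fun n => (G n).carrier) 1⟩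

variable (G : ℕ → BanachSpc.{u})

def l1Sum.inj (n : ℕ) : (G n).carrier →L[ℝ] (l1Sum G).carrier :=
  lp.singleContinuousLinearMap ℝ (fun n => (G n).carrier) 1 n

def l1Sum.proj (n : ℕ) : (l1Sum G).carrier →L[ℝ] (G n).carrier :=
  lp.evalCLM ℝ (fun n => (G n).carrier) 1 n

lemma l1Sum.norm_inj_le (n : ℕ) : ‖l1Sum.inj G n‖ ≤ 1 :=
  ContinuousLinearMap.opNorm_le_bound _ zero_le_one fun x => by
    rw [one_mul]
    exact (lp.norm_single (E := fun n => (G n).carrier) (p := 1) zero_lt_one n x).le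

lemma l1Sum.norm_proj_le (n : ℕ) : ‖l1Sum.proj G n‖ ≤ 1 :=
  ContinuousLinearMap.opNorm_le_bound _ zero_le_one fun x => by
    rw [one_mul]
    exact lp.norm_apply_le_norm one_ne_zero x n

lemma l1Sum.proj_comp_inj_self (n : ℕ) :
    (l1Sum.proj G n).comp (l1Sum.inj G n) = .id ℝ (G n).carrier := by
  ext x
  exact lp.single_apply_self (E := fun n => (G n).carrier) 1 n x

lemma l1Sum.proj_comp_inj_of_ne {k n : ℕ} (h : k ≠ n) :
    (l1Sum.proj G k).comp (l1Sum.inj G n) = 0 := by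
  ext x
  exact lp.single_apply_ne (E := fun n => (G n).carrier) 1 n x h

end BanachSpc

open BanachSpc in
/-- The witness is `U = ∑ₙ Vₙ ∘ projₙ`. -/
lemma IsPBanachIdeal.exists_mem_comp_inj_eq {q : ℝ} {B : OperatorIdeal.{u}}
    (hB : IsPBanachIdeal q B) {G : ℕ → BanachSpc.{u}} {E : BanachSpc.{u}}
    {V : ∀ n, (G n).carrier →L[ℝ] E.carrier} (hV : ∀ n, B.mem (G n) E (V n))
    (hs : Summable fun n => B.nrm (G n) E (V n) ^ q) :
    ∃ U, B.mem (l1Sum G) E U ∧ ∀ n, U.comp (l1Sum.inj G n) = V n := by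
  set W : ℕ → (l1Sum G).carrier →L[ℝ] E.carrier := fun k => (V k).comp (l1Sum.proj G k)
  have hW : ∀ k, B.mem (l1Sum G) E (W k) := fun k => hB.mem_comp_right (hV k) _
  have hW_le : ∀ k, B.nrm (l1Sum G) E (W k) ^ q ≤ B.nrm (G k) E (V k) ^ q := fun k => by
    refine Real.rpow_le_rpow (hB.nonneg _ _ _) ?_ hB.p_pos.le
    exact (hB.nrm_comp_right_le (hV k) _).trans
      (mul_le_of_le_one_right (hB.nonneg _ _ _) (l1Sum.norm_proj_le G k))
  obtain ⟨U, hU, hlim⟩ := hB.exists_mem_tendsto_of_summable hW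
    (hs.of_nonneg_of_le (fun k => Real.rpow_nonneg (hB.nonneg _ _ _) q) hW_le)
  refine ⟨U, hU, fun n => ?_⟩
  have hpartial : ∀ m > n, (∑ k ∈ Finset.range m, W k).comp (l1Sum.inj G n) = V n := by
    intro m hm
    rw [ContinuousLinearMap.finsetSum_comp,
      Finset.sum_eq_single_of_mem n (Finset.mem_range.2 hm)]
    · rw [ContinuousLinearMap.comp_assoc, l1Sum.proj_comp_inj_self, ContinuousLinearMap.comp_id]
    · intro k _ hkn
      rw [ContinuousLinearMap.comp_assoc, l1Sum.proj_comp_inj_of_ne G hkn,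
        ContinuousLinearMap.comp_zero]
  refine tendsto_nhds_unique
    ((((ContinuousLinearMap.compL ℝ _ _ _).flip (l1Sum.inj G n)).continuous.tendsto U).comp hlim)
    (tendsto_const_nhds.congr' ?_)
  exact eventually_atTop.2 ⟨n + 1, fun m hm => (hpartial m hm).symm⟩

namespace OperatorIdeal

open BanachSpc ContinuousLinearMap

variable {p q : ℝ} {A B : OperatorIdeal.{u}} {E F G H : BanachSpc.{u}}

lemma rightQuotient_nrm_nonneg (hA : IsPBanachIdeal p A) (T : E.carrier →L[ℝ] F.carrier) :
    0 ≤ (A.rightQuotient B).nrm E F T :=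
  Real.sSup_nonneg <| by
    rintro _ ⟨G, S, -, -, rfl⟩
    exact hA.nonneg G F _

lemma rightQuotient_nrm_le_of_forall {T : E.carrier →L[ℝ] F.carrier} {c : ℝ} (hc : 0 ≤ c)
    (h : ∀ (G : BanachSpc.{u}) (S : G.carrier →L[ℝ] E.carrier),
      B.mem G E S → B.nrm G E S = 1 → A.nrm G F (T.comp S) ≤ c) :
    (A.rightQuotient B).nrm E F T ≤ c :=
  Real.sSup_le (by rintro _ ⟨G, S, hS, hS1, rfl⟩; exact h G S hS hS1) hc

lemma rightQuotient_nrm_rpow_le_of_forall (hA : IsPBanachIdeal p A)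
    {T : E.carrier →L[ℝ] F.carrier} {c : ℝ} (hc : 0 ≤ c)
    (h : ∀ (G : BanachSpc.{u}) (S : G.carrier →L[ℝ] E.carrier),
      B.mem G E S → B.nrm G E S = 1 → A.nrm G F (T.comp S) ^ p ≤ c) :
    (A.rightQuotient B).nrm E F T ^ p ≤ c :=
  (Real.le_rpow_inv_iff_of_pos (rightQuotient_nrm_nonneg hA T) hc hA.p_pos).1 <|
    rightQuotient_nrm_le_of_forall (Real.rpow_nonneg hc _) fun G S hS hS1 =>
      (Real.le_rpow_inv_iff_of_pos (hA.nonneg G F _) hc hA.p_pos).2 (h G S hS hS1)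

lemma rightQuotient_smul_mem (hA : IsPBanachIdeal p A) (c : ℝ) {T : E.carrier →L[ℝ] F.carrier}
    (hT : (A.rightQuotient B).mem E F T) : (A.rightQuotient B).mem E F (c • T) :=
  fun G S hS => by
    rw [smul_comp]
    exact hA.smul_mem G F c _ (hT G S hS)

lemma rightQuotient_add_mem (hA : IsPBanachIdeal p A) {S T : E.carrier →L[ℝ] F.carrier}
    (hS : (A.rightQuotient B).mem E F S) (hT : (A.rightQuotient B).mem E F T) :
    (A.rightQuotient B).mem E F (S + T) :=
  fun G R hR => by
    rw [add_comp]
    exact hA.add_mem G F _ _ (hS G R hR) (hT G R hR)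

lemma rightQuotient_sub_mem (hA : IsPBanachIdeal p A) {S T : E.carrier →L[ℝ] F.carrier}
    (hS : (A.rightQuotient B).mem E F S) (hT : (A.rightQuotient B).mem E F T) :
    (A.rightQuotient B).mem E F (S - T) :=
  fun G R hR => by
    rw [sub_comp]
    exact hA.sub_mem (hS G R hR) (hT G R hR)

lemma rightQuotient_comp_mem (hA : IsPBanachIdeal p A) (hB : IsPBanachIdeal q B)
    (R : E.carrier →L[ℝ] F.carrier) {T : F.carrier →L[ℝ] G.carrier}
    (S : G.carrier →L[ℝ] H.carrier) (hT : (A.rightQuotient B).mem F G T) :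
    (A.rightQuotient B).mem E H (S.comp (T.comp R)) :=
  fun G' R' hR' => by
    simpa only [comp_assoc] using hA.mem_comp_left S (hT G' (R.comp R') (hB.mem_comp_left R hR'))

lemma rightQuotient_mem_of_forall (hA : IsPBanachIdeal p A) (hB : IsPBanachIdeal q B)
    {T : E.carrier →L[ℝ] F.carrier}
    (h : ∀ (G : BanachSpc.{u}) (S : G.carrier →L[ℝ] E.carrier),
      B.mem G E S → B.nrm G E S = 1 → A.mem G F (T.comp S)) :
    (A.rightQuotient B).mem E F T := by
  intro G S hS
  rcases hB.eq_zero_or_eq_nrm_smul hS with rfl | ⟨S', hS', hS'1, hSeq⟩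
  · rw [comp_zero]
    exact hA.mem_zero
  · rw [hSeq, comp_smul]
    exact hA.smul_mem G F _ _ (h G S' hS' hS'1)

/-- With `cₙ = 2^(-n/q)`, the `B`-norms of the `cₙ Sₙ` are `q`-summable, while unboundedness lets us
pick `A(T Sₙ) > (n + 1) / cₙ`; gluing the `cₙ Sₙ` to one `U` gives `A(T U) > n + 1` for all `n`. -/
lemma exists_bound_of_mem_rightQuotient (hA : IsPBanachIdeal p A) (hB : IsPBanachIdeal q B)
    {T : E.carrier →L[ℝ] F.carrier} (hT : (A.rightQuotient B).mem E F T) :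
    ∃ C, ∀ (G : BanachSpc.{u}) (S : G.carrier →L[ℝ] E.carrier),
      B.mem G E S → B.nrm G E S = 1 → A.nrm G F (T.comp S) ≤ C := by
  by_contra! hunbounded
  set c : ℕ → ℝ := fun n => ((1 / 2 : ℝ) ^ n) ^ q⁻¹
  have hc : ∀ n, 0 < c n := fun n => by positivity
  choose G S hS hS1 hbig using fun n : ℕ => hunbounded ((n + 1) / c n)
  have hcS : ∀ n, B.nrm (G n) E (c n • S n) ^ q = (1 / 2 : ℝ) ^ n := fun n => by
    rw [hB.nrm_smul _ _ _ _ (hS n), abs_of_pos (hc n), hS1 n, mul_one,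
      Real.rpow_inv_rpow (by positivity) hB.p_pos.ne']
  obtain ⟨U, hU, hUinj⟩ := hB.exists_mem_comp_inj_eq (V := fun n => c n • S n)
    (fun n => hB.smul_mem _ _ _ _ (hS n))
    (by simpa only [hcS] using summable_geometric_two)
  obtain ⟨n, hn⟩ := exists_nat_gt (A.nrm _ F (T.comp U))
  have : (n : ℝ) + 1 < A.nrm _ F (T.comp U) :=
    calc (n : ℝ) + 1 < c n * A.nrm (G n) F (T.comp (S n)) := (div_lt_iff₀' (hc n)).1 (hbig n)
      _ = A.nrm (G n) F ((T.comp U).comp (l1Sum.inj G n)) := by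
        rw [comp_assoc, hUinj n, comp_smul, hA.nrm_smul _ _ _ _ (hT _ _ (hS n)),
          abs_of_pos (hc n)]
      _ ≤ A.nrm _ F (T.comp U) * ‖l1Sum.inj G n‖ := hA.nrm_comp_right_le (hT _ U hU) _
      _ ≤ A.nrm _ F (T.comp U) :=
        mul_le_of_le_one_right (hA.nonneg _ _ _) (l1Sum.norm_inj_le G n)
  linarith

lemma nrm_comp_le_rightQuotient_nrm (hA : IsPBanachIdeal p A) (hB : IsPBanachIdeal q B)
    {T : E.carrier →L[ℝ] F.carrier} (hT : (A.rightQuotient B).mem E F T)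
    {S : G.carrier →L[ℝ] E.carrier} (hS : B.mem G E S) (hS1 : B.nrm G E S = 1) :
    A.nrm G F (T.comp S) ≤ (A.rightQuotient B).nrm E F T := by
  obtain ⟨C, hC⟩ := exists_bound_of_mem_rightQuotient hA hB hT
  exact le_csSup ⟨C, by rintro _ ⟨G, S, hS, hS1, rfl⟩; exact hC G S hS hS1⟩ ⟨G, S, hS, hS1, rfl⟩

lemma nrm_comp_rpow_le_rightQuotient_nrm_rpow (hA : IsPBanachIdeal p A)
    (hB : IsPBanachIdeal q B) {T : E.carrier →L[ℝ] F.carrier} (hT : (A.rightQuotient B).mem E F T)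
    {S : G.carrier →L[ℝ] E.carrier} (hS : B.mem G E S) (hS1 : B.nrm G E S = 1) :
    A.nrm G F (T.comp S) ^ p ≤ (A.rightQuotient B).nrm E F T ^ p :=
  Real.rpow_le_rpow (hA.nonneg G F _) (nrm_comp_le_rightQuotient_nrm hA hB hT hS hS1) hA.p_pos.le

lemma nrm_comp_le_rightQuotient_nrm_mul (hA : IsPBanachIdeal p A) (hB : IsPBanachIdeal q B)
    {T : E.carrier →L[ℝ] F.carrier} (hT : (A.rightQuotient B).mem E F T)
    {S : G.carrier →L[ℝ] E.carrier} (hS : B.mem G E S) :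
    A.nrm G F (T.comp S) ≤ (A.rightQuotient B).nrm E F T * B.nrm G E S := by
  rcases hB.eq_zero_or_eq_nrm_smul hS with rfl | ⟨S', hS', hS'1, hSeq⟩
  · rw [comp_zero, hA.nrm_zero]
    exact mul_nonneg (rightQuotient_nrm_nonneg hA T) (hB.nonneg G E 0)
  · calc A.nrm G F (T.comp S) = B.nrm G E S * A.nrm G F (T.comp S') := by
          conv_lhs => rw [hSeq]
          rw [comp_smul, hA.nrm_smul _ _ _ _ (hT G S' hS'), abs_of_nonneg (hB.nonneg G E S)]
      _ ≤ B.nrm G E S * (A.rightQuotient B).nrm E F T :=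
        mul_le_mul_of_nonneg_left (nrm_comp_le_rightQuotient_nrm hA hB hT hS' hS'1)
          (hB.nonneg G E S)
      _ = _ := mul_comm _ _

lemma norm_le_rightQuotient_nrm (hA : IsPBanachIdeal p A) (hB : IsPBanachIdeal q B)
    {T : E.carrier →L[ℝ] F.carrier} (hT : (A.rightQuotient B).mem E F T) :
    ‖T‖ ≤ (A.rightQuotient B).nrm E F T := by
  refine T.opNorm_le_bound (rightQuotient_nrm_nonneg hA T) fun x => ?_
  let R : BanachSpc.{u} := ⟨ULift.{u} ℝ⟩
  let a : R.carrier →L[ℝ] ℝ := (ContinuousLinearEquiv.ulift : ULift ℝ ≃L[ℝ] ℝ)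
  have ha : ‖a‖ ≤ 1 := a.opNorm_le_bound zero_le_one fun t => (one_mul ‖t‖).ge
  have hS : B.mem R E (a.smulRight x) := hB.finrank_mem R E _ (finRankOp_smulRight a x)
  calc ‖T x‖ = ‖(T.comp (a.smulRight x)) (ULift.up 1)‖ := by
        change ‖T x‖ = ‖T ((1 : ℝ) • x)‖
        rw [one_smul]
    _ ≤ ‖T.comp (a.smulRight x)‖ := unit_le_opNorm _ _ (by simp [R])
    _ ≤ A.nrm R F (T.comp (a.smulRight x)) := hA.opnorm_le R F _ (hT R _ hS)
    _ ≤ (A.rightQuotient B).nrm E F T * B.nrm R E (a.smulRight x) :=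
      nrm_comp_le_rightQuotient_nrm_mul hA hB hT hS
    _ ≤ (A.rightQuotient B).nrm E F T * ‖x‖ :=
      mul_le_mul_of_nonneg_left ((hB.rank_one_le R E a x).trans
        (mul_le_of_le_one_left (norm_nonneg x) ha)) (rightQuotient_nrm_nonneg hA T)

lemma rightQuotient_nrm_smulRight_le (hA : IsPBanachIdeal p A) (hB : IsPBanachIdeal q B)
    (a : E.carrier →L[ℝ] ℝ) (y : F.carrier) :
    (A.rightQuotient B).nrm E F (a.smulRight y) ≤ ‖a‖ * ‖y‖ :=
  rightQuotient_nrm_le_of_forall (by positivity) fun G S hS hS1 => by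
    have hS_le : ‖S‖ ≤ 1 := hS1 ▸ hB.opnorm_le G E S hS
    calc A.nrm G F ((a.smulRight y).comp S) = A.nrm G F ((a.comp S).smulRight y) := rfl
      _ ≤ ‖a.comp S‖ * ‖y‖ := hA.rank_one_le G F _ y
      _ ≤ ‖a‖ * ‖y‖ := by
        gcongr
        exact (a.opNorm_comp_le S).trans (mul_le_of_le_one_right (norm_nonneg a) hS_le)

lemma rightQuotient_nrm_smul_le (hA : IsPBanachIdeal p A) (hB : IsPBanachIdeal q B) (c : ℝ)
    {T : E.carrier →L[ℝ] F.carrier} (hT : (A.rightQuotient B).mem E F T) :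
    (A.rightQuotient B).nrm E F (c • T) ≤ |c| * (A.rightQuotient B).nrm E F T :=
  rightQuotient_nrm_le_of_forall (by positivity [rightQuotient_nrm_nonneg (B := B) hA T])
    fun G S hS hS1 => by
      rw [smul_comp, hA.nrm_smul G F c _ (hT G S hS)]
      exact mul_le_mul_of_nonneg_left (nrm_comp_le_rightQuotient_nrm hA hB hT hS hS1)
        (abs_nonneg c)

lemma rightQuotient_nrm_smul (hA : IsPBanachIdeal p A) (hB : IsPBanachIdeal q B) (c : ℝ)
    {T : E.carrier →L[ℝ] F.carrier} (hT : (A.rightQuotient B).mem E F T) :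
    (A.rightQuotient B).nrm E F (c • T) = |c| * (A.rightQuotient B).nrm E F T := by
  refine (rightQuotient_nrm_smul_le hA hB c hT).antisymm ?_
  rcases eq_or_ne c 0 with rfl | hc
  · simpa using rightQuotient_nrm_nonneg hA _
  calc |c| * (A.rightQuotient B).nrm E F T
      = |c| * (A.rightQuotient B).nrm E F (c⁻¹ • c • T) := by rw [inv_smul_smul₀ hc]
    _ ≤ |c| * (|c⁻¹| * (A.rightQuotient B).nrm E F (c • T)) := by
      gcongr
      exact rightQuotient_nrm_smul_le hA hB _ (rightQuotient_smul_mem hA c hT)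
    _ = (A.rightQuotient B).nrm E F (c • T) := by
      rw [abs_inv, ← mul_assoc, mul_inv_cancel₀ (abs_ne_zero.2 hc), one_mul]

lemma rightQuotient_nrm_add_rpow_le (hA : IsPBanachIdeal p A) (hB : IsPBanachIdeal q B)
    {S T : E.carrier →L[ℝ] F.carrier}
    (hS : (A.rightQuotient B).mem E F S) (hT : (A.rightQuotient B).mem E F T) :
    (A.rightQuotient B).nrm E F (S + T) ^ p ≤
      (A.rightQuotient B).nrm E F S ^ p + (A.rightQuotient B).nrm E F T ^ p := by
  have hnonneg : ∀ X : E.carrier →L[ℝ] F.carrier, 0 ≤ (A.rightQuotient B).nrm E F X ^ p :=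
    fun X => Real.rpow_nonneg (rightQuotient_nrm_nonneg hA X) p
  refine rightQuotient_nrm_rpow_le_of_forall hA (add_nonneg (hnonneg S) (hnonneg T))
    fun G R hR hR1 => ?_
  rw [add_comp]
  exact (hA.p_triangle G F _ _ (hS G R hR) (hT G R hR)).trans (add_le_add
    (nrm_comp_rpow_le_rightQuotient_nrm_rpow hA hB hS hR hR1)
    (nrm_comp_rpow_le_rightQuotient_nrm_rpow hA hB hT hR hR1))

lemma rightQuotient_nrm_comp_comp_le (hA : IsPBanachIdeal p A) (hB : IsPBanachIdeal q B)
    (R : E.carrier →L[ℝ] F.carrier) {T : F.carrier →L[ℝ] G.carrier}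
    (S : G.carrier →L[ℝ] H.carrier) (hT : (A.rightQuotient B).mem F G T) :
    (A.rightQuotient B).nrm E H (S.comp (T.comp R)) ≤
      ‖S‖ * (A.rightQuotient B).nrm F G T * ‖R‖ := by
  have hQ := rightQuotient_nrm_nonneg (B := B) hA T
  refine rightQuotient_nrm_le_of_forall (by positivity) fun G' R' hR' hR'1 => ?_
  have hRR' : B.mem G' F (R.comp R') := hB.mem_comp_left R hR'
  calc A.nrm G' H ((S.comp (T.comp R)).comp R')
      = A.nrm G' H (S.comp (T.comp (R.comp R'))) := by simp only [comp_assoc]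
    _ ≤ ‖S‖ * A.nrm G' G (T.comp (R.comp R')) := hA.nrm_comp_left_le S (hT G' _ hRR')
    _ ≤ ‖S‖ * ((A.rightQuotient B).nrm F G T * B.nrm G' F (R.comp R')) := by
      gcongr
      exact nrm_comp_le_rightQuotient_nrm_mul hA hB hT hRR'
    _ ≤ ‖S‖ * ((A.rightQuotient B).nrm F G T * ‖R‖) := by
      gcongr
      simpa [hR'1] using hB.nrm_comp_left_le R hR'
    _ = ‖S‖ * (A.rightQuotient B).nrm F G T * ‖R‖ := by ring

/-- A Cauchy sequence for `A ∘ B⁻¹` is Cauchy in operator norm, with limit `T`; composed with a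
normalized `S ∈ B` it is Cauchy in `A`, whose limit must then be `T S`. -/
lemma rightQuotient_complete (hA : IsPBanachIdeal p A) (hB : IsPBanachIdeal q B)
    (f : ℕ → E.carrier →L[ℝ] F.carrier) (hf : ∀ n, (A.rightQuotient B).mem E F (f n))
    (hcauchy : ∀ ε > (0 : ℝ), ∃ N : ℕ, ∀ m ≥ N, ∀ n ≥ N,
      (A.rightQuotient B).nrm E F (f m - f n) ^ p < ε) :
    ∃ T, (A.rightQuotient B).mem E F T ∧
      ∀ ε > (0 : ℝ), ∃ N : ℕ, ∀ n ≥ N, (A.rightQuotient B).nrm E F (f n - T) ^ p < ε := by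
  have hsub : ∀ m n, (A.rightQuotient B).mem E F (f m - f n) := fun m n =>
    rightQuotient_sub_mem hA (hf m) (hf n)
  have hnorm_cauchy : CauchySeq f := by
    refine Metric.cauchySeq_iff.2 fun ε hε => ?_
    obtain ⟨N, hN⟩ := hcauchy (ε ^ p) (Real.rpow_pos_of_pos hε p)
    refine ⟨N, fun m hm n hn => ?_⟩
    rw [dist_eq_norm]
    exact (norm_le_rightQuotient_nrm hA hB (hsub m n)).trans_lt
      ((Real.rpow_lt_rpow_iff (rightQuotient_nrm_nonneg hA _) hε.le hA.p_pos).1 (hN m hm n hn))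
  obtain ⟨T, hT⟩ := cauchySeq_tendsto_of_complete hnorm_cauchy
  have hcomp : ∀ (G : BanachSpc.{u}) (S : G.carrier →L[ℝ] E.carrier),
      B.mem G E S → B.nrm G E S = 1 → A.mem G F (T.comp S) ∧
        ∀ ε > (0 : ℝ), ∃ N : ℕ, ∀ n ≥ N, A.nrm G F ((f n).comp S - T.comp S) ^ p < ε := by
    intro G S hS hS1
    refine hA.mem_and_tendsto_of_cauchy_of_tendsto (fun n => hf n G S hS) (fun ε hε => ?_)
      ((((compL ℝ G.carrier E.carrier F.carrier).flip S).continuous.tendsto T).comp hT)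
    obtain ⟨N, hN⟩ := hcauchy ε hε
    refine ⟨N, fun m hm n hn => ?_⟩
    rw [← sub_comp]
    exact (nrm_comp_rpow_le_rightQuotient_nrm_rpow hA hB (hsub m n) hS hS1).trans_lt
      (hN m hm n hn)
  refine ⟨T, rightQuotient_mem_of_forall hA hB fun G S hS hS1 => (hcomp G S hS hS1).1,
    fun ε hε => ?_⟩
  obtain ⟨N, hN⟩ := hcauchy (ε / 4) (by positivity)
  refine ⟨N, fun n hn => lt_of_le_of_lt (b := ε / 2) ?_ (by linarith)⟩
  refine rightQuotient_nrm_rpow_le_of_forall hA (by positivity) fun G S hS hS1 => ?_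
  obtain ⟨hTS, hconv⟩ := hcomp G S hS hS1
  obtain ⟨M, hM⟩ := hconv (ε / 4) (by positivity)
  set m := max N M
  have hsplit : (f n - T).comp S = (f n - f m).comp S + ((f m).comp S - T.comp S) := by
    rw [sub_comp, sub_comp]
    abel
  rw [hsplit]
  calc _ ≤ A.nrm G F ((f n - f m).comp S) ^ p + A.nrm G F ((f m).comp S - T.comp S) ^ p :=
        hA.p_triangle G F _ _ (hsub n m G S hS) (hA.sub_mem (hf m G S hS) hTS)
    _ ≤ ε / 4 + ε / 4 := add_le_add
        ((nrm_comp_rpow_le_rightQuotient_nrm_rpow hA hB (hsub n m) hS hS1).trans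
          (hN n hn m (le_max_left N M)).le)
        (hM m (le_max_right N M)).le
    _ = ε / 2 := by ring

end OperatorIdeal

open OperatorIdeal

/-- The right-`B`-quotient `A ∘ B⁻¹` of a `p`-Banach ideal `A` by a `q`-Banach
ideal `B` is a `p`-Banach ideal. -/
theorem rightQuotient_is_pBanach (p q : ℝ) (A B : OperatorIdeal.{u})
    (hA : IsPBanachIdeal p A) (hB : IsPBanachIdeal q B) :
    IsPBanachIdeal p (A.rightQuotient B) :=
  { p_pos := hA.p_pos
    p_le_one := hA.p_le_one
    finrank_mem := fun _ F _ hT G S _ => hA.finrank_mem G F _ (hT.comp_right S)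
    nonneg := fun _ _ => rightQuotient_nrm_nonneg hA
    opnorm_le := fun _ _ _ => norm_le_rightQuotient_nrm hA hB
    rank_one_le := fun _ _ => rightQuotient_nrm_smulRight_le hA hB
    smul_mem := fun _ _ => rightQuotient_smul_mem hA
    nrm_smul := fun _ _ c _ => rightQuotient_nrm_smul hA hB c
    add_mem := fun _ _ _ _ => rightQuotient_add_mem hA
    p_triangle := fun _ _ _ _ => rightQuotient_nrm_add_rpow_le hA hB
    comp_mem := fun _ _ _ _ => rightQuotient_comp_mem hA hB
    comp_le := fun _ _ _ _ => rightQuotient_nrm_comp_comp_le hA hB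
    complete := fun _ _ => rightQuotient_complete hA hB }
end
end

section
/- For any p-Banach operator ideal (A, **A**) (0 < p ≤ 1), the conjugate ideal (A^Δ, **A**^Δ), defined by T ∈ A^Δ(E,F) iff there is c ≥ 0 with |tr(TL)| ≤ c·**A**(L) for all finite rank operators L ∈ F(F,E), with **A**^Δ(T) the infimum of such c, is a Banach operator ideal (i.e., 1-normed and complete). -/
noncomputable section

open scoped Classical

universe u

/-!
A finite rank `L = ∑ bᵢ ⊗ xᵢ` turns `T ↦ tr (T ∘ L) = ∑ bᵢ (T xᵢ)` into a continuous linear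
functional, so `A^Δ` is the set of operators on which all these functionals are bounded by
`c · A(L)`. Such bounds add up, which makes `A^Δ` `1`-normed whatever `p` is; tested against rank
one `L` they dominate the operator norm; and they survive operator norm limits, which gives
completeness. Stability under composition is cyclicity of the trace.
-/

namespace FinRankOp

variable {E F G : BanachSpc.{u}}

lemma smulRight (a : E.carrier →L[ℝ] ℝ) (y : F.carrier) : FinRankOp (a.smulRight y) := by
  have hle : LinearMap.range (a.smulRight y : E.carrier →ₗ[ℝ] F.carrier) ≤ ℝ ∙ y := by
    rintro _ ⟨z, rfl⟩
    exact Submodule.mem_span_singleton.2 ⟨a z, rfl⟩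
  exact Submodule.finiteDimensional_of_le hle

lemma comp_left {L : E.carrier →L[ℝ] F.carrier} (hL : FinRankOp L)
    (S : F.carrier →L[ℝ] G.carrier) : FinRankOp (S.comp L) := by
  have : FiniteDimensional ℝ (LinearMap.range (L : E.carrier →ₗ[ℝ] F.carrier)) := hL
  change FiniteDimensional ℝ (LinearMap.range
    ((S : F.carrier →ₗ[ℝ] G.carrier) ∘ₗ (L : E.carrier →ₗ[ℝ] F.carrier)))
  rw [LinearMap.range_comp]
  infer_instance

lemma comp_right_s2 {L : F.carrier →L[ℝ] G.carrier} (hL : FinRankOp L)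
    (R : E.carrier →L[ℝ] F.carrier) : FinRankOp (L.comp R) := by
  have : FiniteDimensional ℝ (LinearMap.range (L : F.carrier →ₗ[ℝ] G.carrier)) := hL
  exact Submodule.finiteDimensional_of_le (LinearMap.range_comp_le_range
    (R : E.carrier →ₗ[ℝ] F.carrier) (L : F.carrier →ₗ[ℝ] G.carrier))

lemma exists_eq_sum_smulRight {L : E.carrier →L[ℝ] F.carrier} (hL : FinRankOp L) :
    ∃ (n : ℕ) (b : Fin n → E.carrier →L[ℝ] ℝ) (x : Fin n → F.carrier),
      L = ∑ i, (b i).smulRight (x i) := by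
  have : FiniteDimensional ℝ (LinearMap.range (L : E.carrier →ₗ[ℝ] F.carrier)) := hL
  set W := LinearMap.range (L : E.carrier →ₗ[ℝ] F.carrier)
  let B := Module.finBasis ℝ W
  let Lw : E.carrier →L[ℝ] W := L.codRestrict W fun z => LinearMap.mem_range_self _ z
  refine ⟨Module.finrank ℝ W, fun i => (B.coord i).toContinuousLinearMap.comp Lw,
    fun i => B i, ?_⟩
  ext z
  have hz := congrArg Subtype.val (B.sum_repr (Lw z))
  rw [Submodule.coe_sum] at hz
  simpa [Lw] using hz.symm

end FinRankOp

lemma fTrace_eq_trace_restrict {E : BanachSpc.{u}} (T : E.carrier →L[ℝ] E.carrier)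
    (p : Submodule ℝ E.carrier) [FiniteDimensional ℝ p]
    (hp : LinearMap.range (T : E.carrier →ₗ[ℝ] E.carrier) ≤ p) :
    fTrace T = LinearMap.trace ℝ p ((T : E.carrier →ₗ[ℝ] E.carrier).restrict
      (p := p) (q := p) fun x _ => hp (LinearMap.mem_range_self _ x)) := by
  set r := LinearMap.range (T : E.carrier →ₗ[ℝ] E.carrier)
  have : FiniteDimensional ℝ r := Submodule.finiteDimensional_of_le hp
  -- both restrictions factor through the inclusion `r ≤ p`, and the trace is cyclic
  let f : p →ₗ[ℝ] r := LinearMap.codRestrict r ((T : E.carrier →ₗ[ℝ] E.carrier).domRestrict p)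
    fun x => LinearMap.mem_range_self _ _
  let g : r →ₗ[ℝ] p := Submodule.inclusion hp
  change LinearMap.trace ℝ r (f ∘ₗ g) = LinearMap.trace ℝ p (g ∘ₗ f)
  exact (LinearMap.trace_comp_comm' f g).symm

lemma fTrace_sum_smulRight {E : BanachSpc.{u}} {ι : Type*} [Fintype ι]
    (b : ι → E.carrier →L[ℝ] ℝ) (x : ι → E.carrier) :
    fTrace (∑ i, (b i).smulRight (x i)) = ∑ i, b i (x i) := by
  set S : E.carrier →L[ℝ] E.carrier := ∑ i, (b i).smulRight (x i)
  set p := Submodule.span ℝ (Set.range x)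
  have : FiniteDimensional ℝ p := FiniteDimensional.span_of_finite ℝ (Set.finite_range x)
  have hx : ∀ i, x i ∈ p := fun i => Submodule.subset_span (Set.mem_range_self i)
  have hS : LinearMap.range (S : E.carrier →ₗ[ℝ] E.carrier) ≤ p := by
    rintro _ ⟨z, rfl⟩
    simpa [S] using
      Submodule.sum_mem p fun i _ => p.smul_mem (b i z) (hx i)
  have hres : (S : E.carrier →ₗ[ℝ] E.carrier).restrict (p := p) (q := p)
      (fun z _ => hS (LinearMap.mem_range_self _ z)) =
      ∑ i, ((b i : E.carrier →ₗ[ℝ] ℝ).domRestrict p).smulRight ⟨x i, hx i⟩ := by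
    ext z
    simp [S]
  rw [fTrace_eq_trace_restrict S p hS, hres, map_sum]
  simp only [LinearMap.trace_smulRight, LinearMap.domRestrict_apply, ContinuousLinearMap.coe_coe]

lemma fTrace_smulRight {E : BanachSpc.{u}} (a : E.carrier →L[ℝ] ℝ) (y : E.carrier) :
    fTrace (a.smulRight y) = a y := by
  simpa using fTrace_sum_smulRight (fun _ : Unit => a) fun _ => y

namespace FinRankOp

variable {E F G : BanachSpc.{u}} {L : F.carrier →L[ℝ] E.carrier}

lemma exists_clm_eq_fTrace_comp (hL : FinRankOp L) :
    ∃ φ : (E.carrier →L[ℝ] F.carrier) →L[ℝ] ℝ, ∀ T, φ T = fTrace (T.comp L) := by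
  obtain ⟨n, b, x, rfl⟩ := hL.exists_eq_sum_smulRight
  refine ⟨∑ i, (b i).comp (ContinuousLinearMap.apply ℝ F.carrier (x i)), fun T => ?_⟩
  have hcomp : T.comp (∑ i, (b i).smulRight (x i)) = ∑ i, (b i).smulRight (T (x i)) := by
    ext z; simp
  rw [hcomp, fTrace_sum_smulRight]
  simp

lemma fTrace_comp_comm (hL : FinRankOp L) (T : E.carrier →L[ℝ] G.carrier)
    (S : G.carrier →L[ℝ] F.carrier) :
    fTrace ((S.comp T).comp L) = fTrace (T.comp (L.comp S)) := by
  obtain ⟨n, b, x, rfl⟩ := hL.exists_eq_sum_smulRight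
  have hleft : (S.comp T).comp (∑ i, (b i).smulRight (x i)) =
      ∑ i, (b i).smulRight (S (T (x i))) := by
    ext z; simp
  have hright : T.comp ((∑ i, (b i).smulRight (x i)).comp S) =
      ∑ i, ((b i).comp S).smulRight (T (x i)) := by
    ext z; simp
  rw [hleft, hright, fTrace_sum_smulRight, fTrace_sum_smulRight]
  rfl

end FinRankOp

namespace OperatorIdeal

open Filter Topology

variable {p : ℝ} {A : OperatorIdeal.{u}} {E F G H : BanachSpc.{u}}

/-- `c` is one of the constants over which `A.conj.nrm` takes the infimum. -/
def IsTraceBound (A : OperatorIdeal.{u}) (T : E.carrier →L[ℝ] F.carrier) (c : ℝ) : Prop :=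
  0 ≤ c ∧ ∀ L : F.carrier →L[ℝ] E.carrier, FinRankOp L →
    |fTrace (T.comp L)| ≤ c * A.nrm F E L

variable {S T : E.carrier →L[ℝ] F.carrier} {c d : ℝ}

namespace IsTraceBound

lemma mono (hA : IsPBanachIdeal p A) (h : A.IsTraceBound T c) (hcd : c ≤ d) :
    A.IsTraceBound T d :=
  ⟨h.1.trans hcd, fun L hL =>
    (h.2 L hL).trans (mul_le_mul_of_nonneg_right hcd (hA.nonneg F E L))⟩

lemma zero : A.IsTraceBound (0 : E.carrier →L[ℝ] F.carrier) 0 := by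
  refine ⟨le_rfl, fun L hL => ?_⟩
  obtain ⟨φ, hφ⟩ := hL.exists_clm_eq_fTrace_comp
  rw [← hφ, map_zero, abs_zero, zero_mul]

lemma add (hS : A.IsTraceBound S c) (hT : A.IsTraceBound T d) :
    A.IsTraceBound (S + T) (c + d) := by
  refine ⟨add_nonneg hS.1 hT.1, fun L hL => ?_⟩
  obtain ⟨φ, hφ⟩ := hL.exists_clm_eq_fTrace_comp
  rw [← hφ, map_add, hφ, hφ, add_mul]
  exact (abs_add_le _ _).trans (add_le_add (hS.2 L hL) (hT.2 L hL))

lemma smul (hT : A.IsTraceBound T c) (a : ℝ) : A.IsTraceBound (a • T) (|a| * c) := by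
  refine ⟨mul_nonneg (abs_nonneg a) hT.1, fun L hL => ?_⟩
  obtain ⟨φ, hφ⟩ := hL.exists_clm_eq_fTrace_comp
  rw [← hφ, map_smul, hφ, smul_eq_mul, abs_mul, mul_assoc]
  exact mul_le_mul_of_nonneg_left (hT.2 L hL) (abs_nonneg a)

lemma of_tendsto {ι : Type*} {l : Filter ι} [l.NeBot] {g : ι → E.carrier →L[ℝ] F.carrier}
    (hg : Tendsto g l (𝓝 T)) (h : ∀ᶠ i in l, A.IsTraceBound (g i) c) :
    A.IsTraceBound T c := by
  refine ⟨h.exists.elim fun _ hi => hi.1, fun L hL => ?_⟩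
  obtain ⟨φ, hφ⟩ := hL.exists_clm_eq_fTrace_comp
  have hlim : Tendsto (fun i => |fTrace ((g i).comp L)|) l (𝓝 |fTrace (T.comp L)|) := by
    simpa only [← hφ, Function.comp_def] using ((φ.continuous.tendsto T).comp hg).abs
  exact le_of_tendsto hlim (h.mono fun i hi => hi.2 L hL)

lemma smulRight (hA : IsPBanachIdeal p A) (a : E.carrier →L[ℝ] ℝ) (y : F.carrier) :
    A.IsTraceBound (a.smulRight y) (‖a‖ * ‖y‖) := by
  refine ⟨by positivity, fun L hL => ?_⟩
  have hcomp : (a.smulRight y).comp L = (a.comp L).smulRight y := by ext z; simp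
  rw [hcomp, fTrace_smulRight, ← Real.norm_eq_abs]
  calc ‖a (L y)‖ ≤ ‖a‖ * (‖L‖ * ‖y‖) := a.le_opNorm_of_le (L.le_opNorm y)
    _ ≤ ‖a‖ * (A.nrm F E L * ‖y‖) := by
      gcongr
      exact hA.opnorm_le F E L (hA.finrank_mem F E L hL)
    _ = ‖a‖ * ‖y‖ * A.nrm F E L := by ring

/-- Testing against the rank one operators `f ⊗ x` recovers `|f (T x)|`. -/
lemma opNorm_le (hA : IsPBanachIdeal p A) (hT : A.IsTraceBound T c) : ‖T‖ ≤ c := by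
  refine T.opNorm_le_bound hT.1 fun x =>
    NormedSpace.norm_le_dual_bound ℝ (T x) (mul_nonneg hT.1 (norm_nonneg x)) fun f => ?_
  have hcomp : T.comp (f.smulRight x) = f.smulRight (T x) := by ext; simp
  have htr := hT.2 _ (FinRankOp.smulRight f x)
  rw [hcomp, fTrace_smulRight] at htr
  calc ‖f (T x)‖ ≤ c * A.nrm F E (f.smulRight x) := htr
    _ ≤ c * (‖f‖ * ‖x‖) := mul_le_mul_of_nonneg_left (hA.rank_one_le F E f x) hT.1
    _ = c * ‖x‖ * ‖f‖ := by ring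

lemma comp (hA : IsPBanachIdeal p A) {T : F.carrier →L[ℝ] G.carrier}
    (hT : A.IsTraceBound T c) (R : E.carrier →L[ℝ] F.carrier) (S : G.carrier →L[ℝ] H.carrier) :
    A.IsTraceBound (S.comp (T.comp R)) (‖S‖ * c * ‖R‖) := by
  refine ⟨by have := hT.1; positivity, fun L hL => ?_⟩
  rw [hL.fTrace_comp_comm, ContinuousLinearMap.comp_assoc]
  calc |fTrace (T.comp (R.comp (L.comp S)))| ≤ c * A.nrm G F (R.comp (L.comp S)) :=
        hT.2 _ ((hL.comp_right_s2 S).comp_left R)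
    _ ≤ c * (‖R‖ * A.nrm H E L * ‖S‖) :=
        mul_le_mul_of_nonneg_left (hA.comp_le G H E F S L R (hA.finrank_mem H E L hL)) hT.1
    _ = ‖S‖ * c * ‖R‖ * A.nrm H E L := by ring

end IsTraceBound

lemma conj_nrm_nonneg (T : E.carrier →L[ℝ] F.carrier) : 0 ≤ A.conj.nrm E F T :=
  Real.sInf_nonneg fun _ hc => hc.1

lemma conj_nrm_le (h : A.IsTraceBound T c) : A.conj.nrm E F T ≤ c :=
  csInf_le ⟨0, fun _ hd => hd.1⟩ h

lemma isTraceBound_conj_nrm (hA : IsPBanachIdeal p A) (hT : A.conj.mem E F T) :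
    A.IsTraceBound T (A.conj.nrm E F T) := by
  obtain ⟨c, hc⟩ := hT
  refine ⟨conj_nrm_nonneg T, fun L hL => ?_⟩
  rcases (hA.nonneg F E L).eq_or_lt with hzero | hpos
  · simpa [← hzero] using hc.2 L hL
  · rw [← div_le_iff₀ hpos]
    exact le_csInf ⟨c, hc⟩ fun d hd => (div_le_iff₀ hpos).2 (hd.2 L hL)

lemma conj_mem_add (hS : A.conj.mem E F S) (hT : A.conj.mem E F T) : A.conj.mem E F (S + T) :=
  let ⟨_, hc⟩ := hS
  let ⟨_, hd⟩ := hT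
  ⟨_, IsTraceBound.add hc hd⟩

lemma conj_mem_smul (a : ℝ) (hT : A.conj.mem E F T) : A.conj.mem E F (a • T) :=
  let ⟨_, hc⟩ := hT
  ⟨_, IsTraceBound.smul hc a⟩

lemma conj_mem_sub (hS : A.conj.mem E F S) (hT : A.conj.mem E F T) : A.conj.mem E F (S - T) := by
  rw [sub_eq_add_neg, ← neg_one_smul ℝ T]
  exact conj_mem_add hS (conj_mem_smul _ hT)

lemma conj_mem_of_finRankOp (hA : IsPBanachIdeal p A) (hT : FinRankOp T) : A.conj.mem E F T := by
  obtain ⟨n, a, y, rfl⟩ := hT.exists_eq_sum_smulRight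
  exact Finset.sum_induction _ (A.conj.mem E F) (fun _ _ => conj_mem_add)
    ⟨0, IsTraceBound.zero⟩ fun i _ => ⟨_, IsTraceBound.smulRight hA (a i) (y i)⟩

lemma conj_nrm_smul (hA : IsPBanachIdeal p A) (a : ℝ) (hT : A.conj.mem E F T) :
    A.conj.nrm E F (a • T) = |a| * A.conj.nrm E F T := by
  refine le_antisymm (conj_nrm_le ((isTraceBound_conj_nrm hA hT).smul a)) ?_
  rcases eq_or_ne a 0 with rfl | ha
  · simpa using conj_nrm_nonneg _
  · have hle : A.conj.nrm E F T ≤ |a⁻¹| * A.conj.nrm E F (a • T) := by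
      conv_lhs => rw [← inv_smul_smul₀ ha T]
      exact conj_nrm_le ((isTraceBound_conj_nrm hA (conj_mem_smul a hT)).smul a⁻¹)
    rw [abs_inv] at hle
    rwa [← le_inv_mul_iff₀ (abs_pos.2 ha)]

/-- Cauchy sequences for `A.conj.nrm` are Cauchy in operator norm; their operator norm limit
is also the `A.conj.nrm` limit because trace bounds pass to operator norm limits. -/
lemma conj_complete (hA : IsPBanachIdeal p A) (f : ℕ → E.carrier →L[ℝ] F.carrier)
    (hf : ∀ n, A.conj.mem E F (f n))
    (hC : ∀ ε > (0 : ℝ), ∃ N, ∀ m ≥ N, ∀ n ≥ N, A.conj.nrm E F (f m - f n) < ε) :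
    ∃ T, A.conj.mem E F T ∧ ∀ ε > (0 : ℝ), ∃ N, ∀ n ≥ N, A.conj.nrm E F (f n - T) < ε := by
  have hbound : ∀ m n, A.IsTraceBound (f m - f n) (A.conj.nrm E F (f m - f n)) :=
    fun m n => isTraceBound_conj_nrm hA (conj_mem_sub (hf m) (hf n))
  have hcauchy : CauchySeq f := by
    refine Metric.cauchySeq_iff.2 fun ε hε => ?_
    obtain ⟨N, hN⟩ := hC ε hε
    exact ⟨N, fun m hm n hn => (dist_eq_norm (f m) (f n)).trans_lt
      (((hbound m n).opNorm_le hA).trans_lt (hN m hm n hn))⟩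
  obtain ⟨T, hT⟩ := cauchySeq_tendsto_of_complete hcauchy
  have hlim : ∀ ε > (0 : ℝ), ∃ N, ∀ n ≥ N, A.IsTraceBound (f n - T) ε := by
    intro ε hε
    obtain ⟨N, hN⟩ := hC ε hε
    refine ⟨N, fun n hn => IsTraceBound.of_tendsto (tendsto_const_nhds.sub hT) ?_⟩
    filter_upwards [eventually_ge_atTop N] with m hm
    exact (hbound n m).mono hA (hN n hn m hm).le
  refine ⟨T, ?_, fun ε hε => ?_⟩
  · obtain ⟨N, hN⟩ := hlim 1 one_pos
    simpa using conj_mem_sub (hf N) ⟨1, hN N le_rfl⟩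
  · obtain ⟨N, hN⟩ := hlim (ε / 2) (half_pos hε)
    exact ⟨N, fun n hn => (conj_nrm_le (hN n hn)).trans_lt (half_lt_self hε)⟩

end OperatorIdeal

open OperatorIdeal

/-- The conjugate ideal `(A^Δ, 𝐀^Δ)` of any `p`-Banach ideal is a Banach
(i.e. `1`-Banach) operator ideal. -/
theorem conj_is_Banach (p : ℝ) (A : OperatorIdeal.{u}) (hA : IsPBanachIdeal p A) :
    IsPBanachIdeal 1 A.conj :=
  { p_pos := one_pos
    p_le_one := le_rfl
    finrank_mem _ _ _ hT := conj_mem_of_finRankOp hA hT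
    nonneg _ _ := conj_nrm_nonneg
    opnorm_le _ _ _ hT := (isTraceBound_conj_nrm hA hT).opNorm_le hA
    rank_one_le _ _ a y := conj_nrm_le (IsTraceBound.smulRight hA a y)
    smul_mem _ _ a _ hT := conj_mem_smul a hT
    nrm_smul _ _ a _ hT := conj_nrm_smul hA a hT
    add_mem _ _ _ _ := conj_mem_add
    p_triangle _ _ _ _ hS hT := by
      simpa only [Real.rpow_one] using
        conj_nrm_le ((isTraceBound_conj_nrm hA hS).add (isTraceBound_conj_nrm hA hT))
    comp_mem _ _ _ _ R _ S hT :=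
      let ⟨_, hc⟩ := hT
      ⟨_, IsTraceBound.comp hA hc R S⟩
    comp_le _ _ _ _ R _ S hT := conj_nrm_le ((isTraceBound_conj_nrm hA hT).comp hA R S)
    complete _ _ f hf hC := by
      simp only [Real.rpow_one] at hC ⊢
      exact conj_complete hA f hf hC }
end
end

section
/- For every p-Banach operator ideal (A, **A**) (0 < p ≤ 1) and every finite rank operator T between Banach spaces, one has T ∈ A^{ΔΔ} and **A**^{ΔΔ}(T) ≤ **A**(T), i.e., A ⊆ A^{ΔΔ} isometrically on the class of finite rank operators. -/
/-! For finite rank `T` and `L`, the trace is commutative: `tr (T L) = tr (L T)`. Hence every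
admissible constant `c` for `L ∈ A^Δ` gives `|tr (T L)| ≤ c · A(T)`, and taking the infimum,
`|tr (T L)| ≤ A(T) · A^Δ(L)`, which is exactly `A^{ΔΔ}(T) ≤ A(T)`. The infimum is over a
nonempty set because `M ↦ tr (L M)` is bounded in operator norm, which `A` dominates. -/

noncomputable section

open scoped Classical

universe u

namespace LinearMap

variable {X Y V : Type*} [AddCommGroup X] [Module ℝ X] [AddCommGroup Y] [Module ℝ Y]
  [AddCommGroup V] [Module ℝ V]

noncomputable def rangeTrace (f : X →ₗ[ℝ] X) : ℝ :=
  trace ℝ (range f) (f.restrict (p := range f) (q := range f) fun x _ => mem_range_self f x)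

theorem rangeTrace_eq_trace_restrict (f : X →ₗ[ℝ] X) (W : Submodule ℝ X) [FiniteDimensional ℝ W]
    (hW : range f ≤ W) :
    rangeTrace f = trace ℝ W (f.restrict fun x _ => hW (mem_range_self f x)) := by
  have : FiniteDimensional ℝ (range f) := Submodule.finiteDimensional_of_le hW
  let incl : range f →ₗ[ℝ] W := Submodule.inclusion hW
  let corestr : W →ₗ[ℝ] range f :=
    codRestrict (range f) (f ∘ₗ W.subtype) fun x => mem_range_self f x
  calc rangeTrace f = trace ℝ (range f) (corestr ∘ₗ incl) := rfl
    _ = trace ℝ W (incl ∘ₗ corestr) := trace_comp_comm' incl corestr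
    _ = _ := rfl

theorem rangeTrace_comp [FiniteDimensional ℝ V] (u : V →ₗ[ℝ] X) (w : X →ₗ[ℝ] V) :
    rangeTrace (u ∘ₗ w) = trace ℝ V (w ∘ₗ u) := by
  have hle : range (u ∘ₗ w) ≤ range u := range_comp_le_range w u
  let u₀ : V →ₗ[ℝ] range u := codRestrict (range u) u fun x => mem_range_self u x
  calc rangeTrace (u ∘ₗ w) = trace ℝ (range u) (u₀ ∘ₗ w ∘ₗ (range u).subtype) :=
        rangeTrace_eq_trace_restrict _ _ hle
    _ = trace ℝ V ((w ∘ₗ (range u).subtype) ∘ₗ u₀) := trace_comp_comm' _ u₀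
    _ = trace ℝ V (w ∘ₗ u) := rfl

theorem rangeTrace_comm (f : X →ₗ[ℝ] Y) (g : Y →ₗ[ℝ] X) [FiniteDimensional ℝ (range g)] :
    rangeTrace (f ∘ₗ g) = rangeTrace (g ∘ₗ f) := by
  let g₀ : Y →ₗ[ℝ] range g := codRestrict (range g) g fun x => mem_range_self g x
  calc rangeTrace (f ∘ₗ g) = rangeTrace ((f ∘ₗ (range g).subtype) ∘ₗ g₀) := rfl
    _ = trace ℝ (range g) (g₀ ∘ₗ f ∘ₗ (range g).subtype) := rangeTrace_comp _ _
    _ = rangeTrace ((range g).subtype ∘ₗ g₀ ∘ₗ f) :=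
        (rangeTrace_comp (range g).subtype (g₀ ∘ₗ f)).symm
    _ = rangeTrace (g ∘ₗ f) := rfl

end LinearMap

theorem fTrace_comm {E F : BanachSpc.{u}} (T : E.carrier →L[ℝ] F.carrier)
    (L : F.carrier →L[ℝ] E.carrier) (hL : FinRankOp L) :
    fTrace (T.comp L) = fTrace (L.comp T) :=
  have : FiniteDimensional ℝ (LinearMap.range (L : F.carrier →ₗ[ℝ] E.carrier)) := hL
  LinearMap.rangeTrace_comm (T : E.carrier →ₗ[ℝ] F.carrier) L

/-- With `V` the (finite dimensional) range of `L`, `M ↦ tr (L ∘ M)` is the trace of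
`L ∘ M ∘ ι : V → V`, and the trace is continuous on the finite dimensional space `V →L V`. -/
theorem exists_abs_fTrace_comp_le_opNorm {E F : BanachSpc.{u}} (L : F.carrier →L[ℝ] E.carrier)
    (hL : FinRankOp L) :
    ∃ c : ℝ, 0 ≤ c ∧ ∀ M : E.carrier →L[ℝ] F.carrier, |fTrace (L.comp M)| ≤ c * ‖M‖ := by
  let V := LinearMap.range (L : F.carrier →ₗ[ℝ] E.carrier)
  have : FiniteDimensional ℝ V := hL
  let L₀ : F.carrier →L[ℝ] V := L.codRestrict V fun x => LinearMap.mem_range_self _ x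
  let sandwich : (E.carrier →L[ℝ] F.carrier) →L[ℝ] (V →L[ℝ] V) :=
    ContinuousLinearMap.compL ℝ V F.carrier V L₀ ∘L
      (ContinuousLinearMap.compL ℝ V E.carrier F.carrier).flip V.subtypeL
  let tr : (V →L[ℝ] V) →L[ℝ] ℝ :=
    LinearMap.toContinuousLinearMap (LinearMap.trace ℝ V ∘ₗ ContinuousLinearMap.coeLM ℝ)
  refine ⟨‖tr ∘L sandwich‖, (tr ∘L sandwich).opNorm_nonneg, fun M => ?_⟩
  have htr : fTrace (L.comp M) = (tr ∘L sandwich) M :=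
    LinearMap.rangeTrace_comp V.subtype ((L₀ : F.carrier →ₗ[ℝ] V) ∘ₗ M)
  rw [htr, ← Real.norm_eq_abs]
  exact (tr ∘L sandwich).le_opNorm M

namespace OperatorIdeal

variable {A : OperatorIdeal.{u}} {E F : BanachSpc.{u}}

theorem conj_mem_of_finRankOp_s5
    (hA : ∀ M : E.carrier →L[ℝ] F.carrier, FinRankOp M → ‖M‖ ≤ A.nrm E F M)
    (L : F.carrier →L[ℝ] E.carrier) (hL : FinRankOp L) : A.conj.mem F E L := by
  obtain ⟨c, hc, hbound⟩ := exists_abs_fTrace_comp_le_opNorm L hL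
  exact ⟨c, hc, fun M hM => (hbound M).trans (mul_le_mul_of_nonneg_left (hA M hM) hc)⟩

theorem abs_fTrace_comp_le_nrm_mul_conj_nrm
    (hA : ∀ M : E.carrier →L[ℝ] F.carrier, FinRankOp M → ‖M‖ ≤ A.nrm E F M)
    {T : E.carrier →L[ℝ] F.carrier} (hT : FinRankOp T) (hT₀ : 0 ≤ A.nrm E F T)
    (L : F.carrier →L[ℝ] E.carrier) (hL : FinRankOp L) :
    |fTrace (T.comp L)| ≤ A.nrm E F T * A.conj.nrm F E L := by
  obtain ⟨c₀, hc₀⟩ := conj_mem_of_finRankOp_s5 hA L hL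
  rw [fTrace_comm T L hL, conj, ← smul_eq_mul, ← Real.sInf_smul_of_nonneg hT₀]
  refine le_csInf (Set.Nonempty.smul_set ⟨c₀, hc₀⟩) ?_
  rintro _ ⟨c, hc, rfl⟩
  exact (hc.2 T hT).trans_eq (mul_comm _ _)

end OperatorIdeal

/-- `A ⊆ A^{ΔΔ}` isometrically (contractively) on finite rank operators. -/
theorem mem_biconj_of_finRank (p : ℝ) (A : OperatorIdeal.{u}) (hA : IsPBanachIdeal p A)
    (E F : BanachSpc.{u}) (T : E.carrier →L[ℝ] F.carrier) (hT : FinRankOp T) :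
    (A.conj.conj).mem E F T ∧ (A.conj.conj).nrm E F T ≤ A.nrm E F T := by
  have hT₀ : 0 ≤ A.nrm E F T := hA.nonneg E F T
  have key : ∀ L : F.carrier →L[ℝ] E.carrier, FinRankOp L →
      |fTrace (T.comp L)| ≤ A.nrm E F T * A.conj.nrm F E L :=
    OperatorIdeal.abs_fTrace_comp_le_nrm_mul_conj_nrm
      (fun M hM => hA.opnorm_le E F M (hA.finrank_mem E F M hM)) hT hT₀
  exact ⟨⟨_, hT₀, key⟩, csInf_le ⟨0, fun _ hc => hc.1⟩ ⟨hT₀, key⟩⟩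
end
end

section
/- The ideal (P₂, **P₂**) of absolutely 2-summing operators satisfies the P₂-extension property: for every ε > 0, every isometric embedding J : E → G of Banach spaces, and every absolutely 2-summing operator T : E → F, there exists an absolutely 2-summing operator T̃ : G → F with T = T̃ ∘ J and π₂(T̃) ≤ (1+ε)·π₂(T). -/
noncomputable section

/-- `T` is absolutely 2-summing with constant `c`. -/
def TwoSummingWith {E F : Type*} [NormedAddCommGroup E] [NormedSpace ℝ E]
    [NormedAddCommGroup F] [NormedSpace ℝ F] (T : E →L[ℝ] F) (c : ℝ) : Prop :=
  0 ≤ c ∧ ∀ (n : ℕ) (x : Fin n → E),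
    ∑ i, ‖T (x i)‖ ^ 2 ≤
      c ^ 2 * sSup { s : ℝ | ∃ a : StrongDual ℝ E, ‖a‖ ≤ 1 ∧
        s = ∑ i, (a (x i)) ^ 2 }

/-- `T` is absolutely 2-summing. -/
def AbsTwoSumming {E F : Type*} [NormedAddCommGroup E] [NormedSpace ℝ E]
    [NormedAddCommGroup F] [NormedSpace ℝ F] (T : E →L[ℝ] F) : Prop :=
  ∃ c : ℝ, TwoSummingWith T c

/-- The 2-summing norm `π₂`. -/
noncomputable def pi2 {E F : Type*} [NormedAddCommGroup E] [NormedSpace ℝ E]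
    [NormedAddCommGroup F] [NormedSpace ℝ F] (T : E →L[ℝ] F) : ℝ :=
  sInf { c : ℝ | TwoSummingWith T c }


/-!
Pietsch's domination theorem in its finitely additive form: if `T` is 2-summing with constant `c`,
then `‖T x‖² ≤ c² φ((a ↦ a x)²)` for a mean `φ` on `ℓ^∞` of the dual unit ball of `E`. The
embedding of `E` into this `ℓ^∞` extends along `J` without increasing its norm (Hahn–Banach in each
coordinate), and `φ` makes `ℓ^∞` a pre-Hilbert space `L²(φ)`. Through the orthogonal projection
onto the closure of the image of `E` in its completion, `T` extends to `G` and stays dominated by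
the same mean, hence 2-summing with the same constant. As the infimum defining `π₂(T)` is
attained, this gives `π₂(T̃) ≤ π₂(T)`.
-/

open scoped ENNReal NNReal InnerProductSpace lp

universe u

section Mean

variable {X : Type*}

/-- Finitely additive probability measures on `X`: they replace the Pietsch measure on the
weak-* compact dual ball. -/
def IsMean (φ : StrongDual ℝ ℓ^∞(X, ℝ)) : Prop :=
  ∀ (f : ℓ^∞(X, ℝ)) (M : ℝ), (∀ a, f a ≤ M) → φ f ≤ M

namespace IsMean

variable {φ : StrongDual ℝ ℓ^∞(X, ℝ)}

lemma nonneg (hφ : IsMean φ) {f : ℓ^∞(X, ℝ)} (hf : ∀ a, 0 ≤ f a) : 0 ≤ φ f := by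
  have := hφ (-f) 0 fun a => by simpa using hf a
  simpa using this

lemma map_one (hφ : IsMean φ) : φ 1 = 1 := by
  have h₁ := hφ 1 1 fun a => by simp [lp.infty_coeFn_one]
  have h₂ := hφ (-1) (-1) fun a => by rw [lp.coeFn_neg]; simp [lp.infty_coeFn_one]
  rw [map_neg] at h₂
  linarith

end IsMean

def uniformlyNegative (X : Type*) : Set ℓ^∞(X, ℝ) := {f | ∃ δ > 0, ∀ a, f a ≤ -δ}

lemma convex_uniformlyNegative : Convex ℝ (uniformlyNegative X) := by
  rintro f ⟨δ, hδ, hf⟩ g ⟨η, hη, hg⟩ s t hs ht hst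
  refine ⟨min δ η, lt_min hδ hη, fun a => ?_⟩
  have h₁ : s * f a ≤ s * -min δ η := mul_le_mul_of_nonneg_left ((hf a).trans (by simp)) hs
  have h₂ : t * g a ≤ t * -min δ η := mul_le_mul_of_nonneg_left ((hg a).trans (by simp)) ht
  have h₃ : s * -min δ η + t * -min δ η = -min δ η := by rw [← add_mul, hst, one_mul]
  simp only [lp.coeFn_add, lp.coeFn_smul, Pi.add_apply, Pi.smul_apply, smul_eq_mul]
  linarith

lemma isOpen_uniformlyNegative : IsOpen (uniformlyNegative X) := by
  refine Metric.isOpen_iff.2 fun f ⟨δ, hδ, hf⟩ => ⟨δ / 2, half_pos hδ, fun g hg => ?_⟩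
  refine ⟨δ / 2, half_pos hδ, fun a => ?_⟩
  have h := (lp.norm_apply_le_norm ENNReal.top_ne_zero (g - f) a).trans (mem_ball_iff_norm.1 hg).le
  rw [lp.coeFn_sub, Pi.sub_apply, Real.norm_eq_abs, abs_le] at h
  linarith [hf a]

lemma smul_mem_uniformlyNegative {f : ℓ^∞(X, ℝ)} (hf : f ∈ uniformlyNegative X) {t : ℝ}
    (ht : 0 < t) : t • f ∈ uniformlyNegative X := by
  obtain ⟨δ, hδ, hf⟩ := hf
  refine ⟨t * δ, mul_pos ht hδ, fun a => ?_⟩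
  simpa [mul_neg] using mul_le_mul_of_nonneg_left (hf a) ht.le

lemma sub_smul_one_mem_uniformlyNegative {f : ℓ^∞(X, ℝ)} {M δ : ℝ} (hδ : 0 < δ)
    (hf : ∀ a, f a ≤ M) : f - (M + δ) • 1 ∈ uniformlyNegative X :=
  ⟨δ, hδ, fun a => by
    simp only [lp.coeFn_sub, lp.coeFn_smul, lp.infty_coeFn_one, Pi.sub_apply, Pi.smul_apply,
      Pi.one_apply, smul_eq_mul, mul_one]
    linarith [hf a]⟩

/-- A Ky Fan type lemma: the mean is the normalised functional separating `C` from the open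
convex cone of uniformly negative functions. -/
theorem exists_isMean_nonneg_of_convex {C : Set ℓ^∞(X, ℝ)} (hconv : Convex ℝ C)
    (hne : C.Nonempty) (hdisj : Disjoint (uniformlyNegative X) C) :
    ∃ φ : StrongDual ℝ ℓ^∞(X, ℝ), IsMean φ ∧ ∀ g ∈ C, 0 ≤ φ g := by
  obtain ⟨ψ, u, hψU, hψC⟩ :=
    geometric_hahn_banach_open convex_uniformlyNegative isOpen_uniformlyNegative hconv hdisj
  have hneg_one : ∀ t : ℝ, 0 < t → -(t • (1 : ℓ^∞(X, ℝ))) ∈ uniformlyNegative X := fun t ht => by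
    simpa using sub_smul_one_mem_uniformlyNegative (f := 0) (M := 0) ht fun _ => le_rfl
  have hψU_nonpos : ∀ f ∈ uniformlyNegative X, ψ f ≤ 0 := by
    intro f hf
    by_contra! hpos
    have := hψU _ (smul_mem_uniformlyNegative hf (div_pos (by positivity : 0 < |u| + 1) hpos))
    rw [map_smul, smul_eq_mul, div_mul_cancel₀ _ hpos.ne'] at this
    linarith [le_abs_self u]
  have hψ_shift : ∀ f M δ, 0 < δ → (∀ a, f a ≤ M) → ψ f ≤ (M + δ) * ψ 1 := fun f M δ hδ hf => by
    have := hψU_nonpos _ (sub_smul_one_mem_uniformlyNegative hδ hf)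
    rw [map_sub, map_smul, smul_eq_mul] at this
    linarith
  have hψ1 : 0 < ψ 1 := by
    obtain ⟨g, hg⟩ := hne
    have h₁ := hψU _ (hneg_one 1 one_pos)
    have h₂ := hψ_shift g ‖g‖ 1 one_pos fun a =>
      (le_abs_self _).trans (lp.norm_apply_le_norm ENNReal.top_ne_zero g a)
    rw [one_smul, map_neg] at h₁
    nlinarith [hψC g hg, norm_nonneg g]
  refine ⟨(ψ 1)⁻¹ • ψ, fun f M hf => ?_, fun g hg => ?_⟩
  · have h : ψ f ≤ M * ψ 1 := le_of_forall_pos_le_add fun ε hε => by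
      have := hψ_shift f M (ε / ψ 1) (div_pos hε hψ1) hf
      rwa [add_mul, div_mul_cancel₀ _ hψ1.ne'] at this
    rwa [smul_apply, smul_eq_mul, inv_mul_le_iff₀ hψ1, mul_comm]
  · have h : 0 ≤ ψ g := by
      by_contra! hneg
      have h := hψU _ (hneg_one (-ψ g / ψ 1) (div_pos (neg_pos.2 hneg) hψ1))
      rw [map_neg, map_smul, smul_eq_mul, div_mul_cancel₀ _ hψ1.ne', neg_neg] at h
      linarith [hψC g hg]
    exact mul_nonneg (inv_nonneg.2 hψ1.le) h

end Mean

theorem LinearMap.BilinForm.IsPosSemidef.exists_inner_eq {V : Type u} [AddCommGroup V]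
    [Module ℝ V] {B : LinearMap.BilinForm ℝ V} (hB : B.IsPosSemidef) :
    ∃ (H : Type u) (_ : NormedAddCommGroup H) (_ : InnerProductSpace ℝ H) (_ : CompleteSpace H)
      (j : V →ₗ[ℝ] H), ∀ v w, ⟪j v, j w⟫_ℝ = B v w := by
  let core : PreInnerProductSpace.Core ℝ V :=
    { inner v w := B v w
      conj_inner_symm v w := hB.isSymm.eq w v
      re_inner_nonneg v := hB.isNonneg.nonneg v
      add_left u v w := by simp
      smul_left u v r := by simp }
  let : SeminormedAddCommGroup V := InnerProductSpace.Core.toSeminormedAddCommGroup (𝕜 := ℝ)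
  let : InnerProductSpace ℝ V := InnerProductSpace.ofCore core
  exact ⟨UniformSpace.Completion V, inferInstance, inferInstance, inferInstance,
    UniformSpace.Completion.toComplL.toLinearMap, UniformSpace.Completion.inner_coe⟩

theorem IsMean.exists_l2 {X : Type u} {φ : StrongDual ℝ ℓ^∞(X, ℝ)} (hφ : IsMean φ) :
    ∃ (H : Type u) (_ : NormedAddCommGroup H) (_ : InnerProductSpace ℝ H) (_ : CompleteSpace H)
      (j : ℓ^∞(X, ℝ) →L[ℝ] H), ∀ f, ‖j f‖ ^ 2 = φ (f ^ 2) := by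
  let B : LinearMap.BilinForm ℝ ℓ^∞(X, ℝ) := (LinearMap.mul ℝ ℓ^∞(X, ℝ)).compr₂ φ.toLinearMap
  have hB : B.IsPosSemidef :=
    ⟨⟨fun f g => by simp [B, mul_comm]⟩,
      ⟨fun f => hφ.nonneg fun a => by simp [lp.infty_coeFn_mul, mul_self_nonneg]⟩⟩
  obtain ⟨H, _, _, _, j, hj⟩ := hB.exists_inner_eq
  have hjnorm : ∀ f, ‖j f‖ ^ 2 = φ (f ^ 2) := fun f => by
    rw [← real_inner_self_eq_norm_sq, hj, sq]
    rfl
  have hjle : ∀ f, ‖j f‖ ≤ 1 * ‖f‖ := fun f => by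
    rw [one_mul, ← pow_le_pow_iff_left₀ (norm_nonneg _) (norm_nonneg _) two_ne_zero, hjnorm]
    refine hφ _ _ fun a => ?_
    rw [lp.infty_coeFn_pow, Pi.pow_apply, ← sq_abs]
    exact pow_le_pow_left₀ (abs_nonneg _) (lp.norm_apply_le_norm ENNReal.top_ne_zero f a) 2
  exact ⟨H, _, _, inferInstance, j.mkContinuous 1 hjle, hjnorm⟩

theorem LinearMap.exists_extension_of_norm_le_mul_norm {𝕜 E H F : Type*} [RCLike 𝕜]
    [AddCommGroup E] [Module 𝕜 E] [NormedAddCommGroup H] [InnerProductSpace 𝕜 H] [CompleteSpace H]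
    [NormedAddCommGroup F] [NormedSpace 𝕜 F] [CompleteSpace F]
    (e : E →ₗ[𝕜] H) (T : E →ₗ[𝕜] F) {c : ℝ} (hc : 0 ≤ c) (hT : ∀ x, ‖T x‖ ≤ c * ‖e x‖) :
    ∃ S : H →L[𝕜] F, S.toLinearMap ∘ₗ e = T ∧ ‖S‖ ≤ c := by
  set K := (LinearMap.range e).topologicalClosure
  have : CompleteSpace K := (LinearMap.range e).isClosed_topologicalClosure.completeSpace_coe
  let e' : E →ₗ[𝕜] K :=
    e.codRestrict K fun x =>
      (LinearMap.range e).le_topologicalClosure (LinearMap.mem_range_self e x)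
  have hdense : DenseRange e' := by
    rw [DenseRange, Subtype.dense_iff, ← Set.range_comp]
    exact (Submodule.topologicalClosure_coe _).le
  have hT' : ∀ x, ‖T x‖ ≤ c * ‖e' x‖ := hT
  refine ⟨T.extendOfNorm e' ∘L K.orthogonalProjectionOnto, LinearMap.ext fun x => ?_, ?_⟩
  · have hproj : K.orthogonalProjectionOnto (e x) = e' x :=
      K.orthogonalProjectionOnto_mem_subspace_eq_self (e' x)
    simp [hproj, LinearMap.extendOfNorm_eq hdense ⟨c, hT'⟩]
  · exact (ContinuousLinearMap.opNorm_comp_le _ _).trans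
      ((mul_le_mul (LinearMap.opNorm_extendOfNorm_le hdense hc hT')
        K.orthogonalProjectionOnto_norm_le (norm_nonneg _) hc).trans (mul_one c).le)

section LInfty

variable {X E G : Type*} [NormedAddCommGroup E] [NormedSpace ℝ E]
  [NormedAddCommGroup G] [NormedSpace ℝ G]

def toLInfty (σ : X → StrongDual ℝ E) (C : ℝ≥0) (hσ : ∀ a, ‖σ a‖ ≤ C) :
    E →L[ℝ] ℓ^∞(X, ℝ) :=
  LinearMap.mkContinuous
    { toFun x := ⟨fun a => σ a x, memℓp_infty ⟨C * ‖x‖, by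
        rintro _ ⟨a, rfl⟩
        exact (σ a).le_of_opNorm_le (hσ a) x⟩⟩
      map_add' x y := lp.ext <| funext fun a => map_add (σ a) x y
      map_smul' t x := lp.ext <| funext fun a => map_smul (σ a) t x }
    C fun x => lp.norm_le_of_forall_le (by positivity) fun a => (σ a).le_of_opNorm_le (hσ a) x

@[simp]
lemma toLInfty_apply (σ : X → StrongDual ℝ E) (C : ℝ≥0) (hσ : ∀ a, ‖σ a‖ ≤ C) (x : E)
    (a : X) : toLInfty σ C hσ x a = σ a x :=
  rfl

lemma norm_toLInfty_le (σ : X → StrongDual ℝ E) (C : ℝ≥0) (hσ : ∀ a, ‖σ a‖ ≤ C) :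
    ‖toLInfty σ C hσ‖ ≤ C :=
  LinearMap.mkContinuous_norm_le _ C.2 _

lemma lp.infty_sum_sq_apply {ι : Type*} (s : Finset ι) (f : ι → ℓ^∞(X, ℝ)) (a : X) :
    (∑ i ∈ s, f i ^ 2) a = ∑ i ∈ s, f i a ^ 2 := by
  rw [lp.coeFn_sum, Finset.sum_apply]
  simp [lp.infty_coeFn_pow]

lemma norm_evalCLM_comp_le (A : E →L[ℝ] ℓ^∞(X, ℝ)) (a : X) :
    ‖lp.evalCLM ℝ (fun _ => ℝ) ∞ a ∘L A‖ ≤ ‖A‖ :=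
  ContinuousLinearMap.opNorm_le_bound _ (norm_nonneg A) fun x =>
    (lp.norm_apply_le_norm ENNReal.top_ne_zero (A x) a).trans (A.le_opNorm x)

theorem LinearIsometry.exists_extension_norm_le {𝕜 E G : Type*} [RCLike 𝕜]
    [NormedAddCommGroup E] [NormedSpace 𝕜 E] [NormedAddCommGroup G] [NormedSpace 𝕜 G]
    (J : E →ₗᵢ[𝕜] G) (ℓ : StrongDual 𝕜 E) :
    ∃ g : StrongDual 𝕜 G, g ∘L J.toContinuousLinearMap = ℓ ∧ ‖g‖ ≤ ‖ℓ‖ := by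
  let ℓ₀ : StrongDual 𝕜 (LinearMap.range J.toLinearMap) :=
    ℓ ∘L J.equivRange.symm.toLinearIsometry.toContinuousLinearMap
  obtain ⟨g, hg, hgnorm⟩ := exists_extension_norm_eq _ ℓ₀
  refine ⟨g, ContinuousLinearMap.ext fun x => ?_, ?_⟩
  · exact (hg ⟨J x, x, rfl⟩).trans (congrArg ℓ (J.equivRange.symm_apply_apply x))
  · rw [hgnorm]
    exact (ℓ.opNorm_comp_le _).trans
      (mul_le_of_le_one_right (norm_nonneg ℓ) (LinearIsometry.norm_toContinuousLinearMap_le _))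

/-- The metric extension property of `ℓ^∞(X)`. -/
theorem ContinuousLinearMap.exists_extension_lInfty (J : E →ₗᵢ[ℝ] G)
    (A : E →L[ℝ] ℓ^∞(X, ℝ)) :
    ∃ Ã : G →L[ℝ] ℓ^∞(X, ℝ), Ã ∘L J.toContinuousLinearMap = A ∧ ‖Ã‖ ≤ ‖A‖ := by
  choose σ hσJ hσ using fun a => J.exists_extension_norm_le (lp.evalCLM ℝ (fun _ => ℝ) ∞ a ∘L A)
  refine ⟨toLInfty σ ‖A‖₊ fun a => (hσ a).trans (norm_evalCLM_comp_le A a), ?_,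
    norm_toLInfty_le _ _ _⟩
  ext x a
  exact congr($(hσJ a) x)

end LInfty

section TwoSumming

variable {E F G : Type*} [NormedAddCommGroup E] [NormedSpace ℝ E]
  [NormedAddCommGroup F] [NormedSpace ℝ F] [NormedAddCommGroup G] [NormedSpace ℝ G]

lemma bddAbove_sum_sq_dual {n : ℕ} (x : Fin n → E) :
    BddAbove {s : ℝ | ∃ a : StrongDual ℝ E, ‖a‖ ≤ 1 ∧ s = ∑ i, (a (x i)) ^ 2} := by
  refine ⟨∑ i, ‖x i‖ ^ 2, ?_⟩
  rintro _ ⟨a, ha, rfl⟩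
  refine Finset.sum_le_sum fun i _ => ?_
  rw [← sq_abs]
  have h := a.le_of_opNorm_le ha (x i)
  rw [Real.norm_eq_abs, one_mul] at h
  exact pow_le_pow_left₀ (abs_nonneg _) h 2

lemma AbsTwoSumming.twoSummingWith_pi2 {T : E →L[ℝ] F} (hT : AbsTwoSumming T) :
    TwoSummingWith T (pi2 T) := by
  have hclosed : IsClosed {c : ℝ | TwoSummingWith T c} := by
    simp only [TwoSummingWith, Set.ofPred_and, Set.ofPred_forall]
    exact (isClosed_le continuous_const continuous_id).inter <|
      isClosed_iInter fun n => isClosed_iInter fun x =>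
        isClosed_le continuous_const (by fun_prop)
  exact hclosed.csInf_mem hT ⟨0, fun c hc => hc.1⟩

variable (E) in
def evalDualBall : E →L[ℝ] ℓ^∞({a : StrongDual ℝ E // ‖a‖ ≤ 1}, ℝ) :=
  toLInfty Subtype.val 1 fun a => by simpa using a.2

lemma norm_evalDualBall_le : ‖evalDualBall E‖ ≤ 1 :=
  (norm_toLInfty_le _ _ _).trans_eq NNReal.coe_one

def pietschFun (T : E →L[ℝ] F) (c : ℝ) {n : ℕ} (x : Fin n → E) :
    ℓ^∞({a : StrongDual ℝ E // ‖a‖ ≤ 1}, ℝ) :=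
  c ^ 2 • ∑ i, evalDualBall E (x i) ^ 2 - (∑ i, ‖T (x i)‖ ^ 2) • 1

lemma pietschFun_apply (T : E →L[ℝ] F) (c : ℝ) {n : ℕ} (x : Fin n → E)
    (a : {a : StrongDual ℝ E // ‖a‖ ≤ 1}) :
    pietschFun T c x a = c ^ 2 * ∑ i, a.1 (x i) ^ 2 - ∑ i, ‖T (x i)‖ ^ 2 := by
  simp only [pietschFun, lp.coeFn_sub, lp.coeFn_smul, Pi.sub_apply, Pi.smul_apply,
    lp.infty_sum_sq_apply, lp.infty_coeFn_one, Pi.one_apply, smul_eq_mul, mul_one]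
  rfl

lemma pietschFun_append (T : E →L[ℝ] F) (c : ℝ) {n m : ℕ} (x : Fin n → E) (y : Fin m → E) :
    pietschFun T c (Fin.append x y) = pietschFun T c x + pietschFun T c y := by
  simp only [pietschFun, Fin.sum_univ_add, Fin.append_left, Fin.append_right, smul_add, add_smul]
  abel

lemma smul_pietschFun (T : E →L[ℝ] F) (c : ℝ) {n : ℕ} (x : Fin n → E) {t : ℝ} (ht : 0 ≤ t) :
    t • pietschFun T c x = pietschFun T c (√t • x) := by
  have hsq : (√t) ^ 2 = t := Real.sq_sqrt ht
  simp only [pietschFun, Pi.smul_apply, map_smul, smul_pow, norm_smul, mul_pow, Real.norm_eq_abs,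
    sq_abs, hsq, ← Finset.smul_sum, ← Finset.sum_mul, smul_sub, smul_smul, mul_comm t]

open scoped Pointwise in
lemma TwoSummingWith.pietschFun_notMem {T : E →L[ℝ] F} {c : ℝ} (hT : TwoSummingWith T c)
    {n : ℕ} (x : Fin n → E) : pietschFun T c x ∉ uniformlyNegative _ := by
  rintro ⟨δ, hδ, hneg⟩
  set S := {s : ℝ | ∃ a : StrongDual ℝ E, ‖a‖ ≤ 1 ∧ s = ∑ i, (a (x i)) ^ 2}
  have hS : sSup ((c ^ 2) • S) ≤ ∑ i, ‖T (x i)‖ ^ 2 - δ := by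
    refine csSup_le (Set.Nonempty.smul_set ⟨0, 0, by simp, by simp⟩) ?_
    rintro _ ⟨_, ⟨a, ha, rfl⟩, rfl⟩
    have := hneg ⟨a, ha⟩
    rw [pietschFun_apply] at this
    change c ^ 2 * _ ≤ _
    linarith
  rw [Real.sSup_smul_of_nonneg (sq_nonneg c), smul_eq_mul] at hS
  linarith [hT.2 n x]

/-- Pietsch's domination theorem. -/
theorem TwoSummingWith.exists_isMean {T : E →L[ℝ] F} {c : ℝ} (hT : TwoSummingWith T c) :
    ∃ φ, IsMean φ ∧ ∀ x, ‖T x‖ ^ 2 ≤ c ^ 2 * φ (evalDualBall E x ^ 2) := by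
  set C := Set.range fun p : Σ n, Fin n → E => pietschFun T c p.2
  have hconv : Convex ℝ C := by
    rintro _ ⟨⟨n, x⟩, rfl⟩ _ ⟨⟨m, y⟩, rfl⟩ s t hs ht -
    exact ⟨⟨n + m, Fin.append (√s • x) (√t • y)⟩, (pietschFun_append T c _ _).trans
      (by rw [smul_pietschFun T c x hs, smul_pietschFun T c y ht])⟩
  have hdisj : Disjoint (uniformlyNegative _) C :=
    Set.disjoint_right.2 <| by rintro _ ⟨⟨n, x⟩, rfl⟩; exact hT.pietschFun_notMem x
  obtain ⟨φ, hφ, hC⟩ := exists_isMean_nonneg_of_convex hconv ⟨_, ⟨0, Fin.elim0⟩, rfl⟩ hdisj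
  refine ⟨φ, hφ, fun x => ?_⟩
  simpa [pietschFun, hφ.map_one] using hC _ ⟨⟨1, ![x]⟩, rfl⟩

theorem TwoSummingWith.of_sq_norm_le_mean {X : Type*} {φ : StrongDual ℝ ℓ^∞(X, ℝ)}
    (hφ : IsMean φ) (A : G →L[ℝ] ℓ^∞(X, ℝ)) (hA : ‖A‖ ≤ 1) (S : G →L[ℝ] F) {c : ℝ} (hc : 0 ≤ c)
    (hS : ∀ y, ‖S y‖ ^ 2 ≤ c ^ 2 * φ (A y ^ 2)) : TwoSummingWith S c := by
  refine ⟨hc, fun n y => ?_⟩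
  have hmean : φ (∑ i, A (y i) ^ 2) ≤
      sSup {s : ℝ | ∃ b : StrongDual ℝ G, ‖b‖ ≤ 1 ∧ s = ∑ i, (b (y i)) ^ 2} :=
    hφ _ _ fun a => le_csSup (bddAbove_sum_sq_dual y)
      ⟨_, (norm_evalCLM_comp_le A a).trans hA, by rw [lp.infty_sum_sq_apply]; rfl⟩
  calc ∑ i, ‖S (y i)‖ ^ 2 ≤ ∑ i, c ^ 2 * φ (A (y i) ^ 2) := Finset.sum_le_sum fun i _ => hS (y i)
    _ ≤ _ := by
      rw [← Finset.mul_sum, ← map_sum]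
      exact mul_le_mul_of_nonneg_left hmean (sq_nonneg c)

theorem TwoSummingWith.exists_extension [CompleteSpace F] {T : E →L[ℝ] F} {c : ℝ}
    (hT : TwoSummingWith T c) (J : E →ₗᵢ[ℝ] G) :
    ∃ Tt : G →L[ℝ] F, TwoSummingWith Tt c ∧ Tt ∘L J.toContinuousLinearMap = T := by
  obtain ⟨φ, hφ, hTφ⟩ := hT.exists_isMean
  obtain ⟨Ã, hÃJ, hÃ⟩ := (evalDualBall E).exists_extension_lInfty J
  obtain ⟨H, _, _, _, j, hj⟩ := hφ.exists_l2
  have hTj : ∀ x, ‖T x‖ ≤ c * ‖(j ∘L evalDualBall E) x‖ := fun x => by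
    rw [← pow_le_pow_iff_left₀ (norm_nonneg _) (mul_nonneg hT.1 (norm_nonneg _)) two_ne_zero,
      mul_pow, ContinuousLinearMap.comp_apply, hj]
    exact hTφ x
  obtain ⟨S, hSj, hS⟩ := (j ∘L evalDualBall E).toLinearMap.exists_extension_of_norm_le_mul_norm
    T.toLinearMap hT.1 hTj
  refine ⟨S ∘L j ∘L Ã, ?_, ContinuousLinearMap.ext fun x => ?_⟩
  · refine .of_sq_norm_le_mean hφ Ã (hÃ.trans norm_evalDualBall_le) _ hT.1 fun y => ?_
    rw [← hj, ← mul_pow]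
    exact pow_le_pow_left₀ (norm_nonneg _)
      ((S.le_opNorm _).trans (mul_le_mul_of_nonneg_right hS (norm_nonneg _))) 2
  · simpa [← hÃJ] using LinearMap.congr_fun hSj x

end TwoSumming

theorem twoSumming_extension_property_general
    (E G F : Type*) [NormedAddCommGroup E] [NormedSpace ℝ E]
    [NormedAddCommGroup G] [NormedSpace ℝ G]
    [NormedAddCommGroup F] [NormedSpace ℝ F] [CompleteSpace F]
    (ε : ℝ) (hε : 0 < ε) (J : E →L[ℝ] G) (hJ : Isometry J)
    (T : E →L[ℝ] F) (hT : AbsTwoSumming T) :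
    ∃ Tt : G →L[ℝ] F, AbsTwoSumming Tt ∧ (∀ x : E, T x = Tt (J x)) ∧
      pi2 Tt ≤ (1 + ε) * pi2 T := by
  let J' : E →ₗᵢ[ℝ] G :=
    { J.toLinearMap with norm_map' := (AddMonoidHomClass.isometry_iff_norm J).1 hJ }
  have hTπ := hT.twoSummingWith_pi2
  obtain ⟨Tt, hTt, hTtJ⟩ := hTπ.exists_extension J'
  refine ⟨Tt, ⟨_, hTt⟩, fun x => congr($hTtJ.symm x), ?_⟩
  calc pi2 Tt ≤ pi2 T := csInf_le ⟨0, fun _ h => h.1⟩ hTt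
    _ ≤ (1 + ε) * pi2 T := le_mul_of_one_le_left hTπ.1 (by linarith)

/-- the ideal of absolutely 2-summing operators has the `P₂`-extension
property. -/
theorem twoSumming_extension_property
    (E G F : Type*) [NormedAddCommGroup E] [NormedSpace ℝ E] [CompleteSpace E]
    [NormedAddCommGroup G] [NormedSpace ℝ G] [CompleteSpace G]
    [NormedAddCommGroup F] [NormedSpace ℝ F] [CompleteSpace F]
    (ε : ℝ) (hε : 0 < ε) (J : E →L[ℝ] G) (hJ : Isometry J)
    (T : E →L[ℝ] F) (hT : AbsTwoSumming T) :
    ∃ Tt : G →L[ℝ] F, AbsTwoSumming Tt ∧ (∀ x : E, T x = Tt (J x)) ∧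
      pi2 Tt ≤ (1 + ε) * pi2 T :=
  twoSumming_extension_property_general E G F ε hε J hJ T hT
end
end
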